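/- arXiv:1409.5308 — 10 statements merged into one kernel-verified Lean document; each statement's English description precedes it below -/
import Mathlib

section
/- Let G = (V, E) be a finite simple undirected graph with V nonempty, let p : V → ℝ≥0 be vertex profits and c : E → ℝ≥0 be edge costs, and let (G', w') be the subdivision instance of G. Then the maximum of p(V*) − c(E*) over all connected subgraphs T = (V*, E*) of G with V* nonempty equals the maximum of w'(S) over all connected sets S of G'. -/
/-- `S` is a connected set of `G`: `S` is nonempty and the induced subgraph `G[S]`
is connected. -/
def ConnectedSet {V : Type*} (G : SimpleGraph V) (S : Set V) : Prop :=
  S.Nonempty ∧ (G.induce S).Connected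

/-- The subdivision instance `G'` of `G`: the graph on `V ⊔ E` where `v : V` and
`e : E` are adjacent iff `v` is an endpoint of `e`. -/
def Subdivision {V : Type*} (G : SimpleGraph V) : SimpleGraph (V ⊕ G.edgeSet) where
  Adj x y :=
    (∃ (v : V) (e : G.edgeSet), x = Sum.inl v ∧ y = Sum.inr e ∧ v ∈ (e : Sym2 V)) ∨
    (∃ (v : V) (e : G.edgeSet), x = Sum.inr e ∧ y = Sum.inl v ∧ v ∈ (e : Sym2 V))
  symm := by
    constructor
    rintro x y (⟨v, e, rfl, rfl, h⟩ | ⟨v, e, rfl, rfl, h⟩)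
    · exact Or.inr ⟨v, e, rfl, rfl, h⟩
    · exact Or.inl ⟨v, e, rfl, rfl, h⟩
  loopless := by
    constructor
    rintro x (⟨v, e, rfl, h, -⟩ | ⟨v, e, rfl, h, -⟩) <;> simp at h

section Aux

lemma finsum_mem_nonneg' {α : Type*} {f : α → ℝ} (hf : ∀ a, 0 ≤ f a) (s : Set α) :
    0 ≤ ∑ᶠ i ∈ s, f i :=
  finsum_nonneg fun i => finsum_nonneg fun _ => hf i

lemma finsum_mem_mono' {α : Type*} [Finite α] {f : α → ℝ} (hf : ∀ a, 0 ≤ f a)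
    {s t : Set α} (hst : s ⊆ t) :
    ∑ᶠ i ∈ s, f i ≤ ∑ᶠ i ∈ t, f i := by
  have : t = s ∪ (t \ s) := by
    rw [Set.union_diff_cancel hst]
  rw [this, finsum_mem_union (disjoint_sdiff_self_right) s.toFinite (t \ s).toFinite]
  have := finsum_mem_nonneg' hf (t \ s)
  linarith

end Aux

section Main
open SimpleGraph

variable {V : Type*} [Fintype V] (G : SimpleGraph V)
  (p : V → ℝ) (c : Sym2 V → ℝ)

/-- From a connected subgraph, a connected set of the subdivision with the same value. -/
lemma subgraph_to_set (T : G.Subgraph) (hne : T.verts.Nonempty) (hconn : T.Connected) :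
    ∃ S : Set (V ⊕ G.edgeSet), ConnectedSet (Subdivision G) S ∧
      (∑ᶠ z ∈ S, Sum.elim p (fun e : G.edgeSet => -c e) z) =
        (∑ᶠ v ∈ T.verts, p v) - ∑ᶠ e ∈ T.edgeSet, c e := by
  classical
  set E' : Set G.edgeSet := {e : G.edgeSet | (e : Sym2 V) ∈ T.edgeSet} with hE'
  set S : Set (V ⊕ G.edgeSet) := Sum.inl '' T.verts ∪ Sum.inr '' E' with hS
  have hmemL : ∀ v ∈ T.verts, Sum.inl v ∈ S := fun v hv => Or.inl ⟨v, hv, rfl⟩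
  have hmemR : ∀ e ∈ E', Sum.inr e ∈ S := fun e he => Or.inr ⟨e, he, rfl⟩
  obtain ⟨v0, hv0⟩ := hne
  -- connectivity
  have key0 : ∀ (a b : T.verts) (w : T.coe.Walk a b),
      ((Subdivision G).induce S).Reachable ⟨Sum.inl (a : V), hmemL _ a.2⟩
        ⟨Sum.inl (b : V), hmemL _ b.2⟩ := by
    intro a b w
    induction w with
    | nil => rfl
    | @cons a b d hab wd ih =>
      refine Reachable.trans ?_ ih
      have hab' : T.Adj a b := hab
      have hG : G.Adj (a : V) (b : V) := T.adj_sub hab'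
      set e : G.edgeSet := ⟨s((a : V), (b : V)), hG⟩ with he
      have heE : e ∈ E' := by
        simpa [hE', he, SimpleGraph.Subgraph.mem_edgeSet] using hab'
      have h1 : ((Subdivision G).induce S).Adj ⟨Sum.inl (a : V), hmemL _ a.2⟩
          ⟨Sum.inr e, hmemR e heE⟩ :=
        Or.inl ⟨a, e, rfl, rfl, by simp [he]⟩
      have h2 : ((Subdivision G).induce S).Adj ⟨Sum.inr e, hmemR e heE⟩
          ⟨Sum.inl (b : V), hmemL _ b.2⟩ :=
        Or.inr ⟨b, e, rfl, rfl, by simp [he]⟩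
      exact (h1.reachable).trans h2.reachable
  have key : ∀ u (hu : u ∈ T.verts),
      ((Subdivision G).induce S).Reachable ⟨Sum.inl v0, hmemL v0 hv0⟩ ⟨Sum.inl u, hmemL u hu⟩ := by
    intro u hu
    obtain ⟨w⟩ := hconn ⟨v0, hv0⟩ ⟨u, hu⟩
    exact key0 ⟨v0, hv0⟩ ⟨u, hu⟩ w
  have hconnS : ConnectedSet (Subdivision G) S := by
    refine ⟨⟨Sum.inl v0, hmemL v0 hv0⟩, ?_⟩
    rw [SimpleGraph.connected_iff_exists_forall_reachable]
    refine ⟨⟨Sum.inl v0, hmemL v0 hv0⟩, ?_⟩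
    rintro ⟨z, hz⟩
    rcases z with v | e
    · have hv : v ∈ T.verts := by
        rcases hz with ⟨w, hw, hww⟩ | ⟨w, hw, hww⟩ <;> simp_all
      exact key v hv
    · have he : e ∈ E' := by
        rcases hz with ⟨w, hw, hww⟩ | ⟨w, hw, hww⟩ <;> simp_all
      obtain ⟨e, hGe⟩ := e
      induction e using Sym2.ind with
      | _ a b =>
        have hT : T.Adj a b := by
          simpa [hE', SimpleGraph.Subgraph.mem_edgeSet] using he
        have ha : a ∈ T.verts := T.edge_vert hT
        have h1 : ((Subdivision G).induce S).Adj ⟨Sum.inl a, hmemL a ha⟩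
            ⟨Sum.inr ⟨s(a, b), hGe⟩, hz⟩ :=
          Or.inl ⟨a, ⟨s(a, b), hGe⟩, rfl, rfl, by simp⟩
        exact (key a ha).trans h1.reachable
  refine ⟨S, hconnS, ?_⟩
  -- sums
  have hdisj : Disjoint (Sum.inl '' T.verts) (Sum.inr '' E' : Set (V ⊕ G.edgeSet)) := by
    simp [Set.disjoint_left]
  rw [hS, finsum_mem_union hdisj (T.verts.toFinite.image _) (E'.toFinite.image _),
    finsum_mem_image (Sum.inl_injective.injOn),
    finsum_mem_image (Sum.inr_injective.injOn)]
  have hEimg : T.edgeSet = Subtype.val '' E' := by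
    ext e
    simp only [Set.mem_image, hE', Set.mem_setOf_eq, Subtype.exists, exists_and_left,
      exists_prop, exists_eq_right_right]
    exact ⟨fun h => ⟨h, T.edgeSet_subset h⟩, fun h => h.1⟩
  have : ∑ᶠ e ∈ T.edgeSet, c e = ∑ᶠ e ∈ E', c (e : Sym2 V) := by
    rw [hEimg, finsum_mem_image (Subtype.val_injective.injOn)]
  rw [this]
  have hneg : ∑ᶠ e ∈ E', -c (e : Sym2 V) = -∑ᶠ e ∈ E', c (e : Sym2 V) := by
    simpa using finsum_mem_neg_distrib (fun e : G.edgeSet => c (e : Sym2 V)) E'.toFinite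
  simp only [Sum.elim_inl, Sum.elim_inr]
  rw [hneg]
  ring

/-- From a connected set of the subdivision, a connected subgraph with at least that value. -/
lemma set_to_subgraph (hp : ∀ v, 0 ≤ p v) (S : Set (V ⊕ G.edgeSet))
    (hS : ConnectedSet (Subdivision G) S) :
    ∃ T : G.Subgraph, T.verts.Nonempty ∧ T.Connected ∧
      (∑ᶠ z ∈ S, Sum.elim p (fun e : G.edgeSet => -c e) z) ≤
        (∑ᶠ v ∈ T.verts, p v) - ∑ᶠ e ∈ T.edgeSet, c e := by
  classical
  obtain ⟨hSne, hSconn⟩ := hS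
  set A : Set V := {v | Sum.inl v ∈ S} with hA
  set B : Set G.edgeSet := {e | Sum.inr e ∈ S} with hB
  set T : G.Subgraph :=
    { verts := {v | Sum.inl v ∈ S ∨ ∃ e : G.edgeSet, Sum.inr e ∈ S ∧ v ∈ (e : Sym2 V)}
      Adj := fun u v => ∃ h : G.Adj u v, (Sum.inr ⟨s(u, v), h⟩ : V ⊕ G.edgeSet) ∈ S
      adj_sub := fun ⟨h, _⟩ => h
      edge_vert := fun ⟨h, hmem⟩ => Or.inr ⟨⟨_, h⟩, hmem, Sym2.mem_mk_left _ _⟩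
      symm := by
        constructor
        rintro u v ⟨h, hmem⟩
        refine ⟨h.symm, ?_⟩
        convert hmem using 3
        exact Subtype.ext Sym2.eq_swap } with hT
  -- relation between elements of the subdivision and vertices
  set Rel : (V ⊕ G.edgeSet) → V → Prop :=
    fun x u => match x with
      | Sum.inl w => u = w
      | Sum.inr e => u ∈ (e : Sym2 V) with hRel
  have L1 : ∀ x ∈ S, ∀ u, Rel x u → u ∈ T.verts := by
    rintro (w | e) hx u hu
    · exact Or.inl (hu ▸ hx)
    · exact Or.inr ⟨e, hx, hu⟩
  have L2 : ∀ x (hx : x ∈ S), ∀ u v (hu : Rel x u) (hv : Rel x v),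
      T.coe.Reachable ⟨u, L1 x hx u hu⟩ ⟨v, L1 x hx v hv⟩ := by
    rintro (w | e) hx u v hu hv
    · simp only [hRel] at hu hv; subst hu; subst hv; rfl
    · obtain ⟨e, hGe⟩ := e
      induction e using Sym2.ind with
      | _ a b =>
        have hadj : T.Adj a b := ⟨hGe, hx⟩
        simp only [hRel, Sym2.mem_iff] at hu hv
        have hrab : ∀ (x y : V) (hx' : x ∈ T.verts) (hy : y ∈ T.verts),
            x = a ∨ x = b → y = a ∨ y = b → T.coe.Reachable ⟨x, hx'⟩ ⟨y, hy⟩ := by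
          rintro x y hx' hy (rfl | rfl) (rfl | rfl)
          · rfl
          · exact SimpleGraph.Adj.reachable hadj
          · exact SimpleGraph.Adj.reachable hadj.symm
          · rfl
        exact hrab u v _ _ hu hv
  have L3 : ∀ (x y : S), ((Subdivision G).induce S).Reachable x y →
      ∀ u v (hu : Rel x u) (hv : Rel y v),
        T.coe.Reachable ⟨u, L1 x x.2 u hu⟩ ⟨v, L1 y y.2 v hv⟩ := by
    rintro x y ⟨w⟩
    induction w with
    | nil => exact fun u v hu hv => L2 _ (Subtype.coe_prop _) u v hu hv
    | @cons a b d hab wd ih =>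
      intro u v hu hv
      rcases hab with ⟨w0, e, hab1, hab2, hw0⟩ | ⟨w0, e, hab1, hab2, hw0⟩
      · -- a = inl w0, b = inr e
        have hab1' : (a : V ⊕ G.edgeSet) = Sum.inl w0 := hab1
        have hab2' : (b : V ⊕ G.edgeSet) = Sum.inr e := hab2
        have h1 : T.coe.Reachable ⟨u, L1 a a.2 u hu⟩ ⟨w0, L1 a a.2 w0 (by simp [hRel, hab1'])⟩ :=
          L2 a a.2 u w0 hu (by simp [hRel, hab1'])
        have h2 := ih w0 v (by simp [hRel, hab2', hw0]) hv
        exact h1.trans h2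
      · have hab1' : (a : V ⊕ G.edgeSet) = Sum.inr e := hab1
        have hab2' : (b : V ⊕ G.edgeSet) = Sum.inl w0 := hab2
        have h1 : T.coe.Reachable ⟨u, L1 a a.2 u hu⟩ ⟨w0, L1 a a.2 w0 (by simp [hRel, hab1', hw0])⟩ :=
          L2 a a.2 u w0 hu (by simp [hRel, hab1', hw0])
        have h2 := ih w0 v (by simp [hRel, hab2']) hv
        exact h1.trans h2
  have hrep : ∀ u ∈ T.verts, ∃ x ∈ S, Rel x u := by
    rintro u (hu | ⟨e, he, hue⟩)
    · exact ⟨Sum.inl u, hu, rfl⟩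
    · exact ⟨Sum.inr e, he, hue⟩
  have hTne : T.verts.Nonempty := by
    obtain ⟨x, hx⟩ := hSne
    rcases x with w | e
    · exact ⟨w, Or.inl hx⟩
    · exact ⟨(e : Sym2 V).out.1, Or.inr ⟨e, hx, by simp [Sym2.out_fst_mem]⟩⟩
  have hTconn : T.Connected := by
    rw [SimpleGraph.Subgraph.connected_iff]
    refine ⟨⟨?_⟩, hTne⟩
    rintro ⟨u, hu⟩ ⟨v, hv⟩
    obtain ⟨x, hx, hxu⟩ := hrep u hu
    obtain ⟨y, hy, hyv⟩ := hrep v hv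
    have hr := hSconn.preconnected ⟨x, hx⟩ ⟨y, hy⟩
    have := L3 ⟨x, hx⟩ ⟨y, hy⟩ hr u v hxu hyv
    exact this
  refine ⟨T, hTne, hTconn, ?_⟩
  -- sums
  have hSdecomp : S = Sum.inl '' A ∪ Sum.inr '' B := by
    ext z
    rcases z with w | e <;> simp [hA, hB]
  have hdisj : Disjoint (Sum.inl '' A) (Sum.inr '' B : Set (V ⊕ G.edgeSet)) := by
    simp [Set.disjoint_left]
  have hsum : ∑ᶠ z ∈ S, Sum.elim p (fun e : G.edgeSet => -c e) z =
      (∑ᶠ v ∈ A, p v) - ∑ᶠ e ∈ B, c (e : Sym2 V) := by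
    rw [hSdecomp, finsum_mem_union hdisj (A.toFinite.image _) (B.toFinite.image _),
      finsum_mem_image (Sum.inl_injective.injOn),
      finsum_mem_image (Sum.inr_injective.injOn)]
    simp only [Sum.elim_inl, Sum.elim_inr]
    have hneg : ∑ᶠ e ∈ B, -c (e : Sym2 V) = -∑ᶠ e ∈ B, c (e : Sym2 V) := by
      simpa using finsum_mem_neg_distrib (fun e : G.edgeSet => c (e : Sym2 V)) B.toFinite
    rw [hneg]; ring
  have hedge : T.edgeSet = Subtype.val '' B := by
    ext e
    induction e using Sym2.ind with
    | _ a b =>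
      rw [SimpleGraph.Subgraph.mem_edgeSet]
      constructor
      · rintro ⟨h, hmem⟩
        exact ⟨⟨s(a, b), h⟩, hmem, rfl⟩
      · rintro ⟨⟨e', he'⟩, hmem, heq⟩
        simp only at heq
        subst heq
        exact ⟨he', hmem⟩
  have hcost : ∑ᶠ e ∈ T.edgeSet, c e = ∑ᶠ e ∈ B, c (e : Sym2 V) := by
    rw [hedge, finsum_mem_image (Subtype.val_injective.injOn)]
  have hAv : A ⊆ T.verts := fun v hv => Or.inl hv
  have hprofit : ∑ᶠ v ∈ A, p v ≤ ∑ᶠ v ∈ T.verts, p v := finsum_mem_mono' hp hAv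
  rw [hsum, hcost]
  linarith

end Main

/-- The maximum of `p(V*) − c(E*)` over all connected subgraphs `T = (V*, E*)` of `G`
with `V*` nonempty equals the maximum of `w'(S)` over all connected sets `S` of the
subdivision instance `G'` of `G`. -/
theorem stmt0 {V : Type*} [Fintype V] [Nonempty V] (G : SimpleGraph V)
    (p : V → ℝ) (hp : ∀ v, 0 ≤ p v)
    (c : Sym2 V → ℝ) (hc : ∀ e ∈ G.edgeSet, 0 ≤ c e) :
    sSup {x : ℝ | ∃ T : G.Subgraph, T.verts.Nonempty ∧ T.Connected ∧
        x = (∑ᶠ v ∈ T.verts, p v) - ∑ᶠ e ∈ T.edgeSet, c e} =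
    sSup {x : ℝ | ∃ S : Set (V ⊕ G.edgeSet), ConnectedSet (Subdivision G) S ∧
        x = ∑ᶠ z ∈ S, Sum.elim p (fun e : G.edgeSet => -c e) z} := by
  classical
  set SA : Set ℝ := {x : ℝ | ∃ T : G.Subgraph, T.verts.Nonempty ∧ T.Connected ∧
      x = (∑ᶠ v ∈ T.verts, p v) - ∑ᶠ e ∈ T.edgeSet, c e} with hSA
  set SB : Set ℝ := {x : ℝ | ∃ S : Set (V ⊕ G.edgeSet), ConnectedSet (Subdivision G) S ∧
      x = ∑ᶠ z ∈ S, Sum.elim p (fun e : G.edgeSet => -c e) z} with hSB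
  -- upper bound for both sets
  have hboundA : ∀ x ∈ SA, x ≤ ∑ v, p v := by
    rintro x ⟨T, hne, hconn, rfl⟩
    have h1 : ∑ᶠ v ∈ T.verts, p v ≤ ∑ᶠ v ∈ (Set.univ : Set V), p v :=
      finsum_mem_mono' hp (Set.subset_univ _)
    have h2 : 0 ≤ ∑ᶠ e ∈ T.edgeSet, c e := by
      have : ∑ᶠ e ∈ T.edgeSet, c e = ∑ᶠ e ∈ T.edgeSet, (fun e => if e ∈ G.edgeSet then c e else 0) e := by
        apply finsum_mem_congr rfl
        intro e he
        simp [T.edgeSet_subset he]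
      rw [this]
      exact finsum_mem_nonneg' (fun e => by split <;> simp_all [hc]) _
    rw [finsum_mem_univ] at h1
    rw [← finsum_eq_sum_of_fintype]
    linarith
  have hne0 : SA.Nonempty := by
    refine ⟨p (Classical.arbitrary V), ⟨G.singletonSubgraph (Classical.arbitrary V),
      ⟨_, rfl⟩, SimpleGraph.Subgraph.singletonSubgraph_connected, ?_⟩⟩
    rw [SimpleGraph.edgeSet_singletonSubgraph, finsum_mem_empty,
      SimpleGraph.singletonSubgraph_verts, finsum_mem_singleton]
    ring
  have hAB : ∀ x ∈ SA, ∃ y ∈ SB, x ≤ y := by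
    rintro x ⟨T, hne, hconn, rfl⟩
    obtain ⟨S, hS, hval⟩ := subgraph_to_set G p c T hne hconn
    exact ⟨_, ⟨S, hS, rfl⟩, le_of_eq hval.symm⟩
  have hBA : ∀ y ∈ SB, ∃ x ∈ SA, y ≤ x := by
    rintro y ⟨S, hS, rfl⟩
    obtain ⟨T, hne, hconn, hval⟩ := set_to_subgraph G p c hp S hS
    exact ⟨_, ⟨T, hne, hconn, rfl⟩, hval⟩
  have hboundB : ∀ y ∈ SB, y ≤ ∑ v, p v := by
    intro y hy
    obtain ⟨x, hx, hyx⟩ := hBA y hy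
    exact hyx.trans (hboundA x hx)
  have hneB : SB.Nonempty := by
    obtain ⟨x, hx⟩ := hne0
    obtain ⟨y, hy, _⟩ := hAB x hx
    exact ⟨y, hy⟩
  apply le_antisymm
  · apply csSup_le hne0
    intro x hx
    obtain ⟨y, hy, hxy⟩ := hAB x hx
    exact hxy.trans (le_csSup ⟨∑ v, p v, fun z hz => hboundB z hz⟩ hy)
  · apply csSup_le hneB
    intro y hy
    obtain ⟨x, hx, hyx⟩ := hBA y hy
    exact hyx.trans (le_csSup ⟨∑ v, p v, fun z hz => hboundA z hz⟩ hx)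
end

section
/- Let G = (V, E) be a finite simple undirected graph with V nonempty, let p : V → ℝ≥0 be vertex profits and c : E → ℝ be edge costs with c(e) > 0 for every e ∈ E, and let (G', w') be the subdivision instance of G. If S is a connected set of G' whose weight w'(S) is maximal among all connected sets of G', and S contains the split vertex corresponding to an edge e = {a, b} ∈ E, then S also contains both vertices a and b. -/
open SimpleGraph in
lemma reach_aux {W : Type*} (H : SimpleGraph W) (S : Set W) (x y : W) (hy : y ∈ S)
    (hyx : y ≠ x) (hnb : ∀ z ∈ S, H.Adj x z → z = y) :
    ∀ (a b : ↥S) (w : (H.induce S).Walk a b), b = ⟨y, hy⟩ →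
      ∀ (hax : (a : W) ≠ x),
      (H.induce (S \ {x})).Reachable ⟨a, a.2, hax⟩ ⟨y, hy, hyx⟩ := by
  intro a b w
  induction w with
  | nil => rintro rfl hax; exact Reachable.refl _
  | @cons a v b h w ih =>
    rintro rfl hax
    by_cases hvx : (v : W) = x
    · have hadj : H.Adj x (a : W) := by
        have h' : H.Adj (a : W) (v : W) := h
        rw [hvx] at h'; exact h'.symm
      have hay : (a : W) = y := hnb a a.2 hadj
      have heq : (⟨(a : W), a.2, hax⟩ : ↥(S \ {x})) = ⟨y, hy, hyx⟩ := Subtype.ext hay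
      rw [heq]
    · have hr := ih rfl hvx
      have hadj : (H.induce (S \ {x})).Adj ⟨a, a.2, hax⟩ ⟨v, v.2, hvx⟩ := h
      exact hadj.reachable.trans hr

lemma remove_leaf {W : Type*} (H : SimpleGraph W) (S : Set W) (hS : ConnectedSet H S)
    (x y : W) (hy : y ∈ S) (hyx : y ≠ x)
    (hnb : ∀ z ∈ S, H.Adj x z → z = y) :
    ConnectedSet H (S \ {x}) := by
  have : Nonempty ↥(S \ {x}) := ⟨⟨y, hy, hyx⟩⟩
  refine ⟨⟨y, hy, hyx⟩, SimpleGraph.Connected.mk ?_⟩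
  have key : ∀ u : ↥(S \ {x}), (H.induce (S \ {x})).Reachable u ⟨y, hy, hyx⟩ := by
    intro u
    obtain ⟨w⟩ := hS.2.preconnected ⟨u, u.2.1⟩ ⟨y, hy⟩
    have := reach_aux H S x y hy hyx hnb ⟨u, u.2.1⟩ ⟨y, hy⟩ w rfl u.2.2
    exact this
  intro u v
  exact (key u).trans (key v).symm

lemma singleton_connectedSet {W : Type*} (H : SimpleGraph W) (v : W) :
    ConnectedSet H {v} := by
  have : Nonempty ↥({v} : Set W) := ⟨⟨v, rfl⟩⟩
  refine ⟨⟨v, rfl⟩, SimpleGraph.Connected.mk ?_⟩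
  intro a b
  have : a = b := Subtype.ext (a.2.trans b.2.symm)
  rw [this]

lemma finsum_mem_diff_single {W : Type*} [Finite W] (f : W → ℝ) (S : Set W) (x : W)
    (hx : x ∈ S) :
    ∑ᶠ z ∈ S \ {x}, f z = (∑ᶠ z ∈ S, f z) - f x := by
  rw [eq_sub_iff_add_eq, ← finsum_mem_singleton (f := f) (a := x),
    ← finsum_mem_union (by simp) (Set.toFinite _) (Set.toFinite _),
    Set.diff_union_of_subset (by simpa using hx)]


/-- If `S` is a maximum-weight connected set of the subdivision instance `G'`
(with edge costs strictly positive) and `S` contains the split vertex of an edge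
`e = {a, b}`, then `S` contains both `a` and `b`. -/
theorem stmt1 {V : Type*} [Fintype V] [Nonempty V] (G : SimpleGraph V)
    (p : V → ℝ) (hp : ∀ v, 0 ≤ p v)
    (c : Sym2 V → ℝ) (hc : ∀ e ∈ G.edgeSet, 0 < c e)
    (S : Set (V ⊕ G.edgeSet)) (hS : ConnectedSet (Subdivision G) S)
    (hmax : ∀ S' : Set (V ⊕ G.edgeSet), ConnectedSet (Subdivision G) S' →
      (∑ᶠ z ∈ S', Sum.elim p (fun e : G.edgeSet => -c e) z) ≤
        ∑ᶠ z ∈ S, Sum.elim p (fun e : G.edgeSet => -c e) z)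
    (e : G.edgeSet) (a b : V) (hab : (e : Sym2 V) = s(a, b))
    (he : Sum.inr e ∈ S) :
    Sum.inl a ∈ S ∧ Sum.inl b ∈ S := by
  set f : V ⊕ G.edgeSet → ℝ := Sum.elim p (fun e : G.edgeSet => -c e) with hf
  have hce : 0 < c ↑e := hc ↑e e.2
  -- neighbors of the split vertex
  have hnbr : ∀ (u v : V), (e : Sym2 V) = s(u, v) → ∀ z,
      (Subdivision G).Adj (Sum.inr e) z → z = Sum.inl u ∨ z = Sum.inl v := by
    intro u v huv z hz
    rcases hz with ⟨w, e', h1, _, _⟩ | ⟨w, e', h1, h2, h3⟩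
    · exact absurd h1 (by simp)
    · obtain rfl : e = e' := by injection h1
      rw [huv] at h3
      rcases Sym2.mem_iff.mp h3 with rfl | rfl
      · exact Or.inl h2
      · exact Or.inr h2
  -- if one endpoint is in S, so is the other
  have main : ∀ (u v : V), (e : Sym2 V) = s(u, v) → Sum.inl u ∈ S → Sum.inl v ∈ S := by
    intro u v huv hu
    by_contra hv
    have hnb : ∀ z ∈ S, (Subdivision G).Adj (Sum.inr e) z → z = Sum.inl u := by
      intro z hzS hz
      rcases hnbr u v huv z hz with h | h
      · exact h
      · exact absurd (h ▸ hzS) hv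
    have hS' := remove_leaf (Subdivision G) S hS (Sum.inr e) (Sum.inl u) hu
      (by simp) hnb
    have hle := hmax _ hS'
    rw [finsum_mem_diff_single f S (Sum.inr e) he] at hle
    simp only [hf, Sum.elim_inr] at hle
    linarith
  -- one endpoint is in S
  have hor : Sum.inl a ∈ S ∨ Sum.inl b ∈ S := by
    by_contra h
    push_neg at h
    obtain ⟨ha, hb⟩ := h
    have hSeq : S = {Sum.inr e} := by
      refine Set.eq_singleton_iff_unique_mem.mpr ⟨he, ?_⟩
      intro z hz
      have key : ∀ (t : ↥S)
          (w : ((Subdivision G).induce S).Walk ⟨Sum.inr e, he⟩ t),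
          (t : V ⊕ G.edgeSet) = Sum.inr e := by
        intro t w
        cases w with
        | nil => rfl
        | @cons _ v' _ h w =>
          exfalso
          rcases hnbr a b hab v' h with h' | h'
          · exact ha (h' ▸ v'.2)
          · exact hb (h' ▸ v'.2)
      obtain ⟨w⟩ := hS.2.preconnected ⟨Sum.inr e, he⟩ ⟨z, hz⟩
      exact key ⟨z, hz⟩ w
    have hle := hmax {Sum.inl a} (singleton_connectedSet _ _)
    rw [hSeq, finsum_mem_singleton, finsum_mem_singleton] at hle
    simp only [hf, Sum.elim_inl, Sum.elim_inr] at hle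
    have := hp a
    linarith
  rcases hor with h | h
  · exact ⟨h, main a b hab h⟩
  · exact ⟨main b a (hab.trans (Sym2.eq_swap)) h, h⟩
end

section
/- Let G be a finite simple undirected graph with vertex set V and vertex weights w : V → ℝ, and let v_1, …, v_k be distinct vertices such that for each i, w(v_i) < 0 and v_i has exactly two neighbors in G, and v_i is adjacent to v_{i+1} for 1 ≤ i < k; let P = {v_1, …, v_k}. Then for every connected set S of G there exists a set S' ⊆ V with S' = ∅ or S' a connected set, such that w(S') ≥ w(S) and either P ⊆ S' or P ∩ S' = ∅. -/
/-- Merge negative chain rule: let `v 1, …, v k` be distinct negative-weight vertices,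
each having exactly two neighbors, consecutive ones adjacent, and `P = {v 1, …, v k}`.
Then every connected set is dominated by a (possibly empty) connected set that
either contains all of `P` or avoids `P` entirely. -/
theorem stmt5 {V : Type*} [Fintype V] (G : SimpleGraph V) (w : V → ℝ)
    (k : ℕ) (v : Fin k → V) (hinj : Function.Injective v)
    (hneg : ∀ i, w (v i) < 0)
    (hdeg : ∀ i, (G.neighborSet (v i)).ncard = 2)
    (hchain : ∀ (i : Fin k) (h : (i : ℕ) + 1 < k), G.Adj (v i) (v ⟨(i : ℕ) + 1, h⟩)) :
    ∀ S : Set V, ConnectedSet G S → ∃ S' : Set V,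
      (S' = ∅ ∨ ConnectedSet G S') ∧ (∑ᶠ x ∈ S, w x) ≤ (∑ᶠ x ∈ S', w x) ∧
      (Set.range v ⊆ S' ∨ Set.range v ∩ S' = ∅) := by
  classical
  intro S hS
  by_cases h1 : Set.range v ⊆ S
  · exact ⟨S, Or.inr hS, le_rfl, Or.inl h1⟩
  by_cases h3 : S ⊆ Set.range v
  · refine ⟨∅, Or.inl rfl, ?_, Or.inr (Set.inter_empty _)⟩
    rw [finsum_mem_empty, ← Set.coe_toFinset S, finsum_mem_coe_finset]
    apply Finset.sum_nonpos
    intro x hx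
    obtain ⟨i, rfl⟩ := h3 (Set.mem_toFinset.mp hx)
    exact (hneg i).le
  -- main case
  obtain ⟨o, hoS, hoP⟩ := Set.not_subset.mp h3
  obtain ⟨t, htS⟩ : ∃ t, v t ∉ S := by
    by_contra h
    push_neg at h
    exact h1 (by rintro x ⟨i, rfl⟩; exact h i)
  set T : Set V := S \ Set.range v with hTdef
  have hstep : ∀ (a b : Fin k), (a : ℕ) + 1 = (b : ℕ) → G.Adj (v a) (v b) := by
    intro a b hab
    have h : (a : ℕ) + 1 < k := hab ▸ b.isLt
    have h2 := hchain a h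
    have hb : (⟨(a : ℕ) + 1, h⟩ : Fin k) = b := Fin.ext hab
    rwa [hb] at h2
  have hvne : ∀ (a b : Fin k), (a : ℕ) ≠ (b : ℕ) → v a ≠ v b := by
    intro a b hab h
    exact hab (congrArg Fin.val (hinj h))
  have hpair : ∀ (i : Fin k) (y z : V), y ≠ z → G.Adj (v i) y → G.Adj (v i) z →
      G.neighborSet (v i) = {y, z} := by
    intro i y z hyz hy hz
    refine (Set.eq_of_subset_of_ncard_le ?_ ?_ (Set.toFinite _)).symm
    · rw [Set.insert_subset_iff, Set.singleton_subset_iff]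
      exact ⟨(G.mem_neighborSet _ _).mpr hy, (G.mem_neighborSet _ _).mpr hz⟩
    · rw [hdeg i, Set.ncard_pair hyz]
  -- neighbors of an internal chain vertex are the two adjacent chain vertices
  have hint : ∀ (j : Fin k) (h0 : 0 < (j : ℕ)) (hk : (j : ℕ) + 1 < k),
      G.neighborSet (v j) = {v ⟨(j : ℕ) - 1, by omega⟩, v ⟨(j : ℕ) + 1, hk⟩} := by
    intro j h0 hk
    refine hpair j _ _ (hvne _ _ (show (j : ℕ) - 1 ≠ (j : ℕ) + 1 by omega)) ?_ ?_
    · exact (hstep ⟨(j : ℕ) - 1, by omega⟩ j (show (j : ℕ) - 1 + 1 = (j : ℕ) by omega)).symm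
    · exact hstep j ⟨(j : ℕ) + 1, hk⟩ rfl
  -- NBR lemma
  have hNBR : ∀ (aV : V), aV ∉ Set.range v → ∀ (m : Fin k), G.Adj aV (v m) →
      ∀ (j : Fin k), (((m : ℕ) = 0 ∧ (j : ℕ) < (t : ℕ)) ∨ ((m : ℕ) + 1 = k ∧ (t : ℕ) < (j : ℕ))) →
      ∀ y, G.Adj (v j) y → y ∈ S →
      y = aV ∨ ∃ j' : Fin k, y = v j' ∧
        (((m : ℕ) = 0 ∧ (j' : ℕ) < (t : ℕ)) ∨ ((m : ℕ) + 1 = k ∧ (t : ℕ) < (j' : ℕ))) := by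
    intro aV haV m hadj j hinv y hyadj hyS
    have hjk : (j : ℕ) < k := j.isLt
    have htk : (t : ℕ) < k := t.isLt
    have hyt : ∀ (i : Fin k), y = v i → (i : ℕ) ≠ (t : ℕ) := by
      rintro i rfl h
      exact htS ((Fin.ext h : i = t) ▸ hyS)
    rcases hinv with ⟨hm0, hjt⟩ | ⟨hmk, htj⟩
    · -- m = 0, j < t
      by_cases hj0 : (j : ℕ) = 0
      · -- j = m
        have hjm : j = m := Fin.ext (by omega)
        subst hjm
        have hk2 : 1 < k := by omega
        have hv1 : G.Adj (v j) (v ⟨1, hk2⟩) := hstep j ⟨1, hk2⟩ (show (j : ℕ) + 1 = 1 by omega)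
        have hne : v ⟨1, hk2⟩ ≠ aV := fun h => haV ⟨_, h⟩
        have hnb := hpair j (v ⟨1, hk2⟩) aV hne hv1 hadj.symm
        have hy : y ∈ G.neighborSet (v j) := (G.mem_neighborSet _ _).mpr hyadj
        rw [hnb] at hy
        rcases hy with rfl | rfl
        · refine Or.inr ⟨⟨1, hk2⟩, rfl, Or.inl ⟨hm0, ?_⟩⟩
          have h1t : (1 : ℕ) ≠ (t : ℕ) := hyt ⟨1, hk2⟩ rfl
          show (1 : ℕ) < (t : ℕ)
          omega
        · exact Or.inl rfl
      · -- internal, 0 < j, j + 1 < k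
        have h0j : 0 < (j : ℕ) := by omega
        have hj1k : (j : ℕ) + 1 < k := by omega
        have hy : y ∈ G.neighborSet (v j) := (G.mem_neighborSet _ _).mpr hyadj
        rw [hint j h0j hj1k] at hy
        rcases hy with rfl | rfl
        · refine Or.inr ⟨_, rfl, Or.inl ⟨hm0, show (j : ℕ) - 1 < (t : ℕ) by omega⟩⟩
        · refine Or.inr ⟨_, rfl, Or.inl ⟨hm0, ?_⟩⟩
          have h1t : (j : ℕ) + 1 ≠ (t : ℕ) := hyt ⟨(j : ℕ) + 1, hj1k⟩ rfl
          show (j : ℕ) + 1 < (t : ℕ)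
          omega
    · -- m = k - 1, t < j
      by_cases hjk1 : (j : ℕ) + 1 = k
      · -- j = m
        have hjm : j = m := Fin.ext (by omega)
        subst hjm
        have hk2 : 1 < k := by omega
        have hv1 : G.Adj (v j) (v ⟨(j : ℕ) - 1, by omega⟩) :=
          (hstep ⟨(j : ℕ) - 1, by omega⟩ j (show (j : ℕ) - 1 + 1 = (j : ℕ) by omega)).symm
        have hne : v ⟨(j : ℕ) - 1, by omega⟩ ≠ aV := fun h => haV ⟨_, h⟩
        have hnb := hpair j _ aV hne hv1 hadj.symm
        have hy : y ∈ G.neighborSet (v j) := (G.mem_neighborSet _ _).mpr hyadj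
        rw [hnb] at hy
        rcases hy with rfl | rfl
        · refine Or.inr ⟨_, rfl, Or.inr ⟨hmk, ?_⟩⟩
          have h1t : (j : ℕ) - 1 ≠ (t : ℕ) := hyt ⟨(j : ℕ) - 1, by omega⟩ rfl
          show (t : ℕ) < (j : ℕ) - 1
          omega
        · exact Or.inl rfl
      · -- internal
        have h0j : 0 < (j : ℕ) := by omega
        have hj1k : (j : ℕ) + 1 < k := by omega
        have hy : y ∈ G.neighborSet (v j) := (G.mem_neighborSet _ _).mpr hyadj
        rw [hint j h0j hj1k] at hy
        rcases hy with rfl | rfl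
        · refine Or.inr ⟨_, rfl, Or.inr ⟨hmk, ?_⟩⟩
          have h1t : (j : ℕ) - 1 ≠ (t : ℕ) := hyt ⟨(j : ℕ) - 1, by omega⟩ rfl
          show (t : ℕ) < (j : ℕ) - 1
          omega
        · exact Or.inr ⟨_, rfl, Or.inr ⟨hmk, show (t : ℕ) < (j : ℕ) + 1 by omega⟩⟩
  -- segment lemma
  have hseg : ∀ (n' : ℕ) (aS bS : ↥S), aS.1 ∉ Set.range v → bS.1 ∉ Set.range v →
      ∀ (m : Fin k), G.Adj aS.1 (v m) →
      ∀ (cS : ↥S) (W : (G.induce S).Walk cS bS), W.length ≤ n' →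
      (∃ j : Fin k, cS.1 = v j ∧
        (((m : ℕ) = 0 ∧ (j : ℕ) < (t : ℕ)) ∨ ((m : ℕ) + 1 = k ∧ (t : ℕ) < (j : ℕ)))) →
      ∃ W2 : (G.induce S).Walk aS bS, W2.length ≤ W.length := by
    intro n'
    induction n' with
    | zero =>
      intro aS bS ha hb m hadj cS W hlen hex
      obtain ⟨j, hcj, _⟩ := hex
      cases W with
      | nil => exact absurd (hcj ▸ ⟨j, rfl⟩ : bS.1 ∈ Set.range v) hb
      | cons h p => simp [SimpleGraph.Walk.length_cons] at hlen
    | succ n ih =>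
      intro aS bS ha hb m hadj cS W hlen hex
      obtain ⟨j, hcj, hinv⟩ := hex
      cases W with
      | nil => exact absurd (hcj ▸ ⟨j, rfl⟩ : bS.1 ∈ Set.range v) hb
      | @cons _ e _ hAdj W' =>
        have hGadj : G.Adj cS.1 e.1 := hAdj
        rw [hcj] at hGadj
        rcases hNBR aS.1 ha m hadj j hinv e.1 hGadj e.2 with heq | ⟨j', hej', hinv'⟩
        · have hea : e = aS := Subtype.ext heq
          refine ⟨W'.copy hea rfl, ?_⟩
          rw [SimpleGraph.Walk.length_copy, SimpleGraph.Walk.length_cons]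
          omega
        · rw [SimpleGraph.Walk.length_cons] at hlen
          obtain ⟨W2, hW2⟩ := ih aS bS ha hb m hadj e W' (by omega) ⟨j', hej', hinv'⟩
          refine ⟨W2, ?_⟩
          rw [SimpleGraph.Walk.length_cons]
          omega
  -- main reachability lemma
  have hkey : ∀ (n : ℕ) (aS bS : ↥S) (ha : aS.1 ∉ Set.range v) (hb : bS.1 ∉ Set.range v)
      (W : (G.induce S).Walk aS bS), W.length ≤ n →
      (G.induce T).Reachable ⟨aS.1, aS.2, ha⟩ ⟨bS.1, bS.2, hb⟩ := by
    intro n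
    induction n with
    | zero =>
      intro aS bS ha hb W hlen
      cases W with
      | nil => exact SimpleGraph.Reachable.refl _
      | cons h p => simp [SimpleGraph.Walk.length_cons] at hlen
    | succ n ih =>
      intro aS bS ha hb W hlen
      cases W with
      | nil => exact SimpleGraph.Reachable.refl _
      | @cons _ e _ hAdj W' =>
        rw [SimpleGraph.Walk.length_cons] at hlen
        by_cases he : e.1 ∈ Set.range v
        · obtain ⟨m, hm⟩ := he
          have hadjm : G.Adj aS.1 (v m) := by
            have h' : G.Adj aS.1 e.1 := hAdj
            rwa [← hm] at h'
          -- m is an endpoint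
          have hmend : (m : ℕ) = 0 ∨ (m : ℕ) + 1 = k := by
            by_contra hcon
            push_neg at hcon
            obtain ⟨h0, hk⟩ := hcon
            have h0m : 0 < (m : ℕ) := Nat.pos_of_ne_zero h0
            have hm1k : (m : ℕ) + 1 < k := lt_of_le_of_ne m.isLt hk
            have hy : aS.1 ∈ G.neighborSet (v m) := (G.mem_neighborSet _ _).mpr hadjm.symm
            rw [hint m h0m hm1k] at hy
            rcases hy with h | h <;> exact ha ⟨_, h.symm⟩
          have htm : (t : ℕ) ≠ (m : ℕ) := by
            intro h
            apply htS
            rw [(Fin.ext h : t = m), hm]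
            exact e.2
          have hinvm : ((m : ℕ) = 0 ∧ (m : ℕ) < (t : ℕ)) ∨
              ((m : ℕ) + 1 = k ∧ (t : ℕ) < (m : ℕ)) := by
            have htk := t.isLt
            rcases hmend with h | h
            · exact Or.inl ⟨h, by omega⟩
            · exact Or.inr ⟨h, by omega⟩
          obtain ⟨W2, hW2⟩ := hseg W'.length aS bS ha hb m hadjm e W' le_rfl ⟨m, hm.symm, hinvm⟩
          exact ih aS bS ha hb W2 (by omega)
        · have hadjT : (G.induce T).Adj ⟨aS.1, aS.2, ha⟩ ⟨e.1, e.2, he⟩ := hAdj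
          exact hadjT.reachable.trans (ih e bS he hb W' (by omega))
  have hTne : T.Nonempty := ⟨o, hoS, hoP⟩
  have hTconn : ConnectedSet G T := by
    refine ⟨hTne, ?_⟩
    rw [SimpleGraph.connected_iff]
    refine ⟨?_, ⟨⟨o, hoS, hoP⟩⟩⟩
    intro x y
    obtain ⟨W⟩ := hS.2.preconnected ⟨x.1, x.2.1⟩ ⟨y.1, y.2.1⟩
    exact hkey W.length ⟨x.1, x.2.1⟩ ⟨y.1, y.2.1⟩ x.2.2 y.2.2 W le_rfl
  refine ⟨T, Or.inr hTconn, ?_, Or.inr ?_⟩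
  · rw [← Set.coe_toFinset S, ← Set.coe_toFinset T, finsum_mem_coe_finset, finsum_mem_coe_finset]
    have hsub : T.toFinset ⊆ S.toFinset := by
      intro x hx
      rw [Set.mem_toFinset] at hx ⊢
      exact hx.1
    have hsd := Finset.sum_sdiff (f := w) hsub
    have hneg' : ∑ x ∈ S.toFinset \ T.toFinset, w x ≤ 0 := by
      apply Finset.sum_nonpos
      intro x hx
      rw [Finset.mem_sdiff, Set.mem_toFinset, Set.mem_toFinset] at hx
      obtain ⟨hxS, hxT⟩ := hx
      have hr : x ∈ Set.range v := by
        by_contra h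
        exact hxT ⟨hxS, h⟩
      obtain ⟨i, rfl⟩ := hr
      exact (hneg i).le
    linarith
  · ext x
    simp only [Set.mem_inter_iff, Set.mem_empty_iff_false, iff_false]
    rintro ⟨hx1, hx2⟩
    exact hx2.2 hx1
end

section
/- Let G be a finite simple undirected graph with vertex set V and vertex weights w : V → ℝ, and let u, v ∈ V be distinct vertices with w(u) < 0, w(v) < 0, w(u) ≤ w(v), and N(u) = N(v). Then for every connected set S of G there exists a connected set S' of G with u ∉ S' and w(S') ≥ w(S). -/
/-- Mirrored hubs rule: if `u ≠ v`, `w(u) < 0`, `w(v) < 0`, `w(u) ≤ w(v)` and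
`N(u) = N(v)`, then every connected set is dominated by a connected set avoiding `u`. -/
theorem stmt6 {V : Type*} [Fintype V] (G : SimpleGraph V) (w : V → ℝ)
    (u v : V) (huv : u ≠ v) (hu : w u < 0) (hv : w v < 0) (hle : w u ≤ w v)
    (hN : G.neighborSet u = G.neighborSet v) :
    ∀ S : Set V, ConnectedSet G S → ∃ S' : Set V, ConnectedSet G S' ∧
      u ∉ S' ∧ (∑ᶠ x ∈ S, w x) ≤ (∑ᶠ x ∈ S', w x) := by
  classical
  intro S hS
  by_cases hus : u ∈ S
  · -- u ∈ S : replace u by v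
    have hadjvy : ∀ y, G.Adj u y → G.Adj v y := by
      intro y hy
      have : y ∈ G.neighborSet v := hN ▸ hy
      exact this
    have hnadj : ¬ G.Adj u v := by
      intro h
      have : v ∈ G.neighborSet v := hN ▸ h
      exact G.irrefl this
    set S' : Set V := insert v (S \ {u}) with hS'
    have huS' : u ∉ S' := by
      simp [hS', huv, Set.mem_diff]
    have hvS' : v ∈ S' := Set.mem_insert _ _
    -- the hom sending u to v and fixing everything else
    have fmem : ∀ x : V, x ∈ S → x ≠ u → x ∈ S' := by
      intro x hx hxu
      exact Set.mem_insert_of_mem _ ⟨hx, hxu⟩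
    let f : S → S' := fun x =>
      if h : (x : V) = u then ⟨v, hvS'⟩ else ⟨x, fmem x x.2 h⟩
    have hhom : ∀ a b : S, (G.induce S).Adj a b → (G.induce S').Adj (f a) (f b) := by
      rintro ⟨a, ha⟩ ⟨b, hb⟩ hab
      have hab' : G.Adj a b := hab
      show G.Adj ((f ⟨a, ha⟩ : S') : V) ((f ⟨b, hb⟩ : S') : V)
      by_cases hau : a = u
      · have hbu : b ≠ u := by
          intro hb'
          exact G.irrefl (hau ▸ hb' ▸ hab')
        simp only [f, dif_pos hau, dif_neg hbu]
        exact hadjvy b (hau ▸ hab')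
      · by_cases hbu : b = u
        · simp only [f, dif_neg hau, dif_pos hbu]
          exact (hadjvy a (hbu ▸ hab'.symm)).symm
        · simp only [f, dif_neg hau, dif_neg hbu]
          exact hab'
    have hsurj : Function.Surjective f := by
      rintro ⟨y, hy⟩
      rcases hy with hyv | ⟨hyS, hyu⟩
      · by_cases hvs : v ∈ S
        · refine ⟨⟨v, hvs⟩, ?_⟩
          apply Subtype.ext
          simp [f, huv.symm, hyv]
        · refine ⟨⟨u, hus⟩, ?_⟩
          apply Subtype.ext
          simp [f, hyv]
      · refine ⟨⟨y, hyS⟩, ?_⟩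
        apply Subtype.ext
        have hyu' : y ≠ u := hyu
        simp [f, hyu']
    have hconn' : (G.induce S').Connected :=
      hS.2.map ⟨f, fun {a b} h => hhom a b h⟩ hsurj
    have hTfin : (S \ {u} : Set V).Finite := Set.toFinite _
    have hsum : (∑ᶠ x ∈ S, w x) ≤ (∑ᶠ x ∈ S', w x) := by
      have hSdecomp : S = insert u (S \ {u}) := by
        ext x; by_cases hx : x = u <;> simp [hx, hus, Set.mem_diff]
      have h1 : (∑ᶠ x ∈ S, w x) = w u + ∑ᶠ x ∈ (S \ {u} : Set V), w x := by
        conv_lhs => rw [hSdecomp]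
        exact finsum_mem_insert w (fun h => h.2 rfl) hTfin
      by_cases hvs : v ∈ S
      · have hvT : v ∈ (S \ {u} : Set V) := ⟨hvs, huv.symm⟩
        have h2 : S' = S \ {u} := by
          rw [hS', Set.insert_eq_self.2 hvT]
        rw [h1, h2]
        linarith
      · have h2 : (∑ᶠ x ∈ S', w x) = w v + ∑ᶠ x ∈ (S \ {u} : Set V), w x := by
          rw [hS']
          exact finsum_mem_insert w (fun h => hvs h.1) hTfin
        rw [h1, h2]
        linarith
    exact ⟨S', ⟨⟨v, hvS'⟩, hconn'⟩, huS', hsum⟩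
  · exact ⟨S, hS, hus, le_refl _⟩
end

section
/- Let G be a finite simple undirected graph with vertex set V and vertex weights w : V → ℝ. Let v ∈ V with w(v) < 0 have exactly two neighbors u and x (u ≠ x), and suppose there exists a path u = p_0, p_1, …, p_m = x in G with p_i ≠ v for all i, such that ∑_{i=1}^{m} max(−w(p_i), 0) < −w(v). Then for every connected set S of G there exists a connected set S' of G with v ∉ S' and w(S') ≥ w(S). -/
section Helpers

variable {V : Type*} {G : SimpleGraph V}

/-- Lift a walk of `G` whose support lies in `S` to a walk of `G.induce S`. -/
def liftWalk {S : Set V} : ∀ {a b : V} (q : G.Walk a b)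
    (_ : ∀ y ∈ q.support, y ∈ S) (ha : a ∈ S) (hb : b ∈ S),
    (G.induce S).Walk ⟨a, ha⟩ ⟨b, hb⟩
  | _, _, SimpleGraph.Walk.nil, _, _, _ => SimpleGraph.Walk.nil
  | _, _, SimpleGraph.Walk.cons h q, hs, ha, hb =>
      SimpleGraph.Walk.cons (by exact h)
        (liftWalk q (fun y hy => hs y (by simp [hy])) (hs _ (by simp)) hb)

lemma connectedSet_of_walks {S : Set V} (hne : S.Nonempty)
    (h : ∀ a ∈ S, ∀ b ∈ S, ∃ q : G.Walk a b, ∀ y ∈ q.support, y ∈ S) :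
    ConnectedSet G S := by
  refine ⟨hne, ?_⟩
  have : Nonempty S := hne.to_subtype
  refine ⟨fun a b => ?_⟩
  obtain ⟨q, hq⟩ := h a a.2 b b.2
  exact ⟨liftWalk q hq a.2 b.2⟩

lemma walks_of_connectedSet {S : Set V} (h : ConnectedSet G S) :
    ∀ a ∈ S, ∀ b ∈ S, ∃ q : G.Walk a b, ∀ y ∈ q.support, y ∈ S := by
  intro a ha b hb
  obtain ⟨q⟩ := h.2.preconnected ⟨a, ha⟩ ⟨b, hb⟩
  refine ⟨q.map (SimpleGraph.Embedding.induce S).toHom, ?_⟩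
  intro y hy
  replace hy : y ∈ q.support.map (SimpleGraph.Embedding.induce (G := G) S).toHom := by
    rw [← SimpleGraph.Walk.support_map]; exact hy
  simp only [SimpleGraph.Walk.support_map, List.mem_map] at hy
  obtain ⟨z, _, rfl⟩ := hy
  exact z.2

lemma hub_connected {S : Set V} {h0 : V} (h0S : h0 ∈ S)
    (h : ∀ y ∈ S, ∃ q : G.Walk h0 y, ∀ t ∈ q.support, t ∈ S) :
    ConnectedSet G S := by
  refine connectedSet_of_walks ⟨h0, h0S⟩ ?_
  intro a ha b hb
  obtain ⟨qa, hqa⟩ := h a ha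
  obtain ⟨qb, hqb⟩ := h b hb
  refine ⟨qa.reverse.append qb, ?_⟩
  intro y hy
  rw [SimpleGraph.Walk.mem_support_append_iff] at hy
  rcases hy with hy | hy
  · exact hqa y (by rwa [SimpleGraph.Walk.support_reverse, List.mem_reverse] at hy)
  · exact hqb y hy

end Helpers

/-- Least-cost rule: let `v` have `w(v) < 0` and exactly the two neighbors `u ≠ x`,
and suppose there is a path from `u` to `x` avoiding `v` whose vertices `p 1, …, p m`
(all but the first) satisfy `∑ max(−w(p i), 0) < −w(v)`. Then every connected set is
dominated by a connected set avoiding `v`. -/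
theorem stmt7 {V : Type*} [Fintype V] (G : SimpleGraph V) (w : V → ℝ)
    (v u x : V) (hux : u ≠ x) (hv : w v < 0)
    (hN : G.neighborSet v = {u, x})
    (p : G.Walk u x) (hp : p.IsPath) (hvp : v ∉ p.support)
    (hcost : (p.support.tail.map (fun y => max (-(w y)) 0)).sum < -(w v)) :
    ∀ S : Set V, ConnectedSet G S → ∃ S' : Set V, ConnectedSet G S' ∧
      v ∉ S' ∧ (∑ᶠ y ∈ S, w y) ≤ (∑ᶠ y ∈ S', w y) := by
  classical
  intro S hS
  by_cases hvS : v ∈ S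
  swap
  · exact ⟨S, hS, hvS, le_refl _⟩
  have huv : u ≠ v := by
    have : G.Adj v u := by
      have : u ∈ G.neighborSet v := by rw [hN]; left; rfl
      exact this
    exact (G.ne_of_adj this).symm
  have hxv : x ≠ v := by
    have : G.Adj v x := by
      have : x ∈ G.neighborSet v := by rw [hN]; right; rfl
      exact this
    exact (G.ne_of_adj this).symm
  -- the anchor lemma
  have anchor : ∀ y ∈ S, y ≠ v → ∃ z, (z = u ∨ z = x) ∧
      ∃ q : G.Walk z y, ∀ t ∈ q.support, t ∈ S ∧ t ≠ v := by
    intro y hy hyv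
    obtain ⟨q0, hq0⟩ := walks_of_connectedSet hS v hvS y hy
    obtain ⟨r, hrp, hrs⟩ : ∃ r : G.Walk v y, r.IsPath ∧ ∀ t ∈ r.support, t ∈ S :=
      ⟨q0.bypass, q0.bypass_isPath, fun t ht => hq0 t (q0.support_bypass_subset ht)⟩
    cases r with
    | nil => exact absurd rfl hyv
    | cons h r' =>
      rename_i z
      have hz : z = u ∨ z = x := by
        have hz' : z ∈ G.neighborSet v := h
        rw [hN] at hz'
        exact hz'
      rw [SimpleGraph.Walk.cons_isPath_iff] at hrp
      refine ⟨z, hz, r', fun t ht => ⟨hrs t (by simp [ht]), ?_⟩⟩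
      rintro rfl
      exact hrp.2 ht
  -- weight of S decomposes
  have hSdecomp : (∑ᶠ y ∈ S, w y) = w v + ∑ᶠ y ∈ S \ {v}, w y := by
    conv_lhs => rw [show S = insert v (S \ {v}) by
      rw [Set.insert_diff_singleton, Set.insert_eq_self.mpr hvS]]
    exact finsum_mem_insert w (by simp) (Set.toFinite _)
  by_cases hS1 : ∀ y ∈ S, y = v
  · -- S = {v}; take S' = {x}
    have hSv : S = {v} := Set.eq_singleton_iff_unique_mem.mpr ⟨hvS, hS1⟩
    refine ⟨{x}, ?_, by simpa using Ne.symm hxv, ?_⟩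
    · refine connectedSet_of_walks ⟨x, rfl⟩ ?_
      rintro a (rfl : a = x) b (rfl : b = a)
      exact ⟨SimpleGraph.Walk.nil, by rintro y hy; simpa using hy⟩
    · rw [hSv, finsum_mem_singleton, finsum_mem_singleton]
      -- w v ≤ w x
      have hxt : x ∈ p.support.tail := by
        have hxs : x ∈ p.support := p.end_mem_support
        rw [p.support_eq_cons] at hxs
        rcases hxs with _ | h
        · exact absurd rfl hux.symm
        · assumption
      have h1 : max (-(w x)) 0 ≤ (p.support.tail.map (fun y => max (-(w y)) 0)).sum := by
        refine List.single_le_sum ?_ _ (List.mem_map_of_mem hxt)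
        intro a ha
        simp only [List.mem_map] at ha
        obtain ⟨b, _, rfl⟩ := ha
        exact le_max_right _ _
      have h2 : -(w x) ≤ -(w v) := le_of_lt (lt_of_le_of_lt ((le_max_left _ _).trans h1) hcost)
      linarith
  · push_neg at hS1
    obtain ⟨y0, hy0S, hy0v⟩ := hS1
    by_cases hboth : u ∈ S ∧ x ∈ S
    · -- case A
      obtain ⟨huS, hxS⟩ := hboth
      set T : Set V := {y | y ∈ p.support} with hT
      set S' : Set V := (S \ {v}) ∪ T with hS'
      have huS' : u ∈ S' := Or.inr p.start_mem_support
      have hub : ∀ y ∈ S', ∃ q : G.Walk u y, ∀ t ∈ q.support, t ∈ S' := by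
        rintro y (⟨hyS, hyv⟩ | hyT)
        · obtain ⟨z, hz, q, hq⟩ := anchor y hyS hyv
          rcases hz with rfl | rfl
          · exact ⟨q, fun t ht => Or.inl ⟨(hq t ht).1, (hq t ht).2⟩⟩
          · refine ⟨p.append q, fun t ht => ?_⟩
            rw [SimpleGraph.Walk.mem_support_append_iff] at ht
            rcases ht with ht | ht
            · exact Or.inr ht
            · exact Or.inl ⟨(hq t ht).1, (hq t ht).2⟩
        · exact ⟨p.takeUntil y hyT, fun t ht =>
            Or.inr (p.support_takeUntil_subset hyT ht)⟩
      refine ⟨S', hub_connected huS' hub, ?_, ?_⟩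
      · rintro (⟨_, hvv⟩ | hvT)
        · exact hvv rfl
        · exact hvp hvT
      · -- weight
        have hdisj : Disjoint (S \ {v}) (T \ (S \ {v})) := disjoint_sdiff_self_right
        have hunion : S' = (S \ {v}) ∪ (T \ (S \ {v})) := by
          rw [hS', Set.union_diff_self]
        have hsum' : (∑ᶠ y ∈ S', w y) =
            (∑ᶠ y ∈ S \ {v}, w y) + ∑ᶠ y ∈ T \ (S \ {v}), w y := by
          rw [hunion]
          exact finsum_mem_union hdisj (Set.toFinite _) (Set.toFinite _)
        rw [hSdecomp, hsum']
        have key : w v ≤ ∑ᶠ y ∈ T \ (S \ {v}), w y := by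
          set D : Set V := T \ (S \ {v}) with hD
          have hDfin : D.Finite := Set.toFinite _
          have hDsub : ∀ y ∈ D, y ∈ p.support.tail := by
            rintro y ⟨hyT, hyn⟩
            have : y ∈ p.support := hyT
            rw [p.support_eq_cons] at this
            rcases List.mem_cons.mp this with rfl | h
            · exact absurd ⟨huS, huv⟩ hyn
            · exact h
          have hcoe : (∑ᶠ y ∈ D, w y) = ∑ y ∈ hDfin.toFinset, w y := by
            rw [← finsum_mem_coe_finset, Set.Finite.coe_toFinset]
          rw [hcoe]
          have step1 : ∑ y ∈ hDfin.toFinset, (-(max (-(w y)) 0)) ≤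
              ∑ y ∈ hDfin.toFinset, w y :=
            Finset.sum_le_sum (fun i _ => neg_le.mp (le_max_left _ _))
          have step2 : ∑ y ∈ hDfin.toFinset, max (-(w y)) 0 ≤
              ∑ y ∈ p.support.tail.toFinset, max (-(w y)) 0 := by
            refine Finset.sum_le_sum_of_subset_of_nonneg ?_ (fun i _ _ => le_max_right _ _)
            intro y hy
            rw [Set.Finite.mem_toFinset] at hy
            exact List.mem_toFinset.mpr (hDsub y hy)
          have step3 : ∑ y ∈ p.support.tail.toFinset, max (-(w y)) 0 =
              (p.support.tail.map (fun y => max (-(w y)) 0)).sum :=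
            List.sum_toFinset _ (hp.support_nodup.sublist (List.tail_sublist _))
          have : ∑ y ∈ hDfin.toFinset, (-(max (-(w y)) 0)) =
              -(∑ y ∈ hDfin.toFinset, max (-(w y)) 0) := by
            rw [Finset.sum_neg_distrib]
          rw [this] at step1
          have : ∑ y ∈ hDfin.toFinset, max (-(w y)) 0 < -(w v) := by
            rw [step3] at step2
            exact lt_of_le_of_lt step2 hcost
          linarith
        linarith
    · -- case B : exactly one of u, x in S
      have huniq : ∀ z z' : V, (z = u ∨ z = x) → (z' = u ∨ z' = x) →
          z ∈ S → z' ∈ S → z = z' := by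
        rintro z z' (rfl | rfl) (rfl | rfl) hz hz' <;>
          first
          | rfl
          | (exact absurd ⟨by assumption, by assumption⟩ hboth)
      obtain ⟨z0, hz0, q0, hq0⟩ := anchor y0 hy0S hy0v
      have hz0S : z0 ∈ S := (hq0 z0 q0.start_mem_support).1
      have hz0v : z0 ≠ v := (hq0 z0 q0.start_mem_support).2
      refine ⟨S \ {v}, ?_, by simp, ?_⟩
      · refine hub_connected (h0S := ⟨hz0S, hz0v⟩) ?_
        rintro y ⟨hyS, hyv⟩
        obtain ⟨z, hz, q, hq⟩ := anchor y hyS hyv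
        have hzS : z ∈ S := (hq z q.start_mem_support).1
        have : z0 = z := huniq z0 z hz0 hz hz0S hzS
        subst this
        exact ⟨q, fun t ht => ⟨(hq t ht).1, (hq t ht).2⟩⟩
      · rw [hSdecomp]
        linarith
end

section
/- Let G be a finite simple undirected graph with vertex set V and vertex weights w : V → ℝ. If S is a connected set of G whose weight w(S) is maximal among all connected sets of G, |S| ≥ 2, v ∈ S, and w(v) < 0, then v has at least two neighbors in S. -/
/-- Walks in `G.induce S` between vertices different from `v` can be diverted around `v`
when `v` has at most one neighbor in `S`. -/
lemma avoid_vertex {V : Type*} (G : SimpleGraph V) (S : Set V) (v : V)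
    (huniq : ∀ x y : V, x ∈ S → y ∈ S → G.Adj v x → G.Adj v y → x = y) :
    ∀ (n : ℕ) (a b : S) (p : (G.induce S).Walk a b), p.length = n →
      (ha : (a : V) ≠ v) → (hb : (b : V) ≠ v) →
      (G.induce (S \ {v})).Reachable ⟨a, a.2, ha⟩ ⟨b, b.2, hb⟩ := by
  intro n
  induction n using Nat.strong_induction_on with
  | _ n ih =>
    intro a b p hlen ha hb
    cases p with
    | nil => exact SimpleGraph.Reachable.refl _
    | @cons _ c _ hac q =>
      by_cases hcv : (c : V) = v
      · -- next vertex is v; look one step further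
        cases q with
        | nil => exact absurd hcv hb
        | @cons _ d _ hcd q' =>
          have hdv : (d : V) ≠ v := by
            intro h
            have : G.Adj (c : V) (d : V) := hcd
            rw [hcv, h] at this
            exact G.irrefl this
          have hadj1 : G.Adj v (a : V) := by
            have : G.Adj (a : V) (c : V) := hac
            rw [hcv] at this; exact this.symm
          have hadj2 : G.Adj v (d : V) := by
            have : G.Adj (c : V) (d : V) := hcd
            rw [hcv] at this; exact this
          have had : (a : V) = (d : V) := huniq _ _ a.2 d.2 hadj1 hadj2
          have haeq : a = d := Subtype.ext had
          subst haeq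
          have : q'.length < n := by
            simp only [SimpleGraph.Walk.length_cons] at hlen; omega
          exact ih _ this _ _ q' rfl ha hb
      · have hr : (G.induce (S \ {v})).Reachable ⟨c, c.2, hcv⟩ ⟨b, b.2, hb⟩ := by
          have : q.length < n := by
            simp only [SimpleGraph.Walk.length_cons] at hlen; omega
          exact ih _ this _ _ q rfl hcv hb
        have hadj : (G.induce (S \ {v})).Adj ⟨a, a.2, ha⟩ ⟨c, c.2, hcv⟩ := hac
        exact hadj.reachable.trans hr

/-- If `S` is a maximum-weight connected set of `G`, `|S| ≥ 2`, `v ∈ S` and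
`w(v) < 0`, then `v` has at least two neighbors in `S`. -/
theorem stmt10 {V : Type*} [Fintype V] (G : SimpleGraph V) (w : V → ℝ)
    (S : Set V) (hS : ConnectedSet G S)
    (hmax : ∀ S' : Set V, ConnectedSet G S' → (∑ᶠ x ∈ S', w x) ≤ ∑ᶠ x ∈ S, w x)
    (hcard : 2 ≤ S.ncard) (v : V) (hv : v ∈ S) (hneg : w v < 0) :
    2 ≤ (G.neighborSet v ∩ S).ncard := by
  classical
  by_contra hlt
  push_neg at hlt
  have hle1 : (G.neighborSet v ∩ S).ncard ≤ 1 := by omega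
  have huniq : ∀ x y : V, x ∈ S → y ∈ S → G.Adj v x → G.Adj v y → x = y := by
    intro x y hx hy hax hay
    exact (Set.ncard_le_one_iff (s := G.neighborSet v ∩ S) (Set.toFinite _)).mp hle1 ⟨hax, hx⟩ ⟨hay, hy⟩
  set T : Set V := S \ {v} with hT
  -- T is nonempty
  obtain ⟨b, hbS, hbv⟩ := Set.exists_ne_of_one_lt_ncard (s := S) (by omega) v
  have hTne : T.Nonempty := ⟨b, hbS, hbv⟩
  -- T is connected
  have hTconn : (G.induce T).Connected := by
    rw [SimpleGraph.connected_iff]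
    refine ⟨?_, ⟨⟨b, hbS, hbv⟩⟩⟩
    rintro ⟨x, hxS, hxv⟩ ⟨y, hyS, hyv⟩
    have hr : (G.induce S).Reachable ⟨x, hxS⟩ ⟨y, hyS⟩ := hS.2.preconnected _ _
    obtain ⟨p⟩ := hr
    exact avoid_vertex G S v huniq p.length _ _ p rfl hxv hyv
  have hTcs : ConnectedSet G T := ⟨hTne, hTconn⟩
  -- weight comparison
  have hsum := hmax T hTcs
  have hfin : S.Finite := Set.toFinite _
  have hSsum : (∑ᶠ x ∈ S, w x) = ∑ x ∈ hfin.toFinset, w x := by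
    rw [← finsum_mem_coe_finset, Set.Finite.coe_toFinset]
  have hTfin : T.Finite := Set.toFinite _
  have hTsum : (∑ᶠ x ∈ T, w x) = ∑ x ∈ hfin.toFinset.erase v, w x := by
    have hset : ((hfin.toFinset.erase v : Finset V) : Set V) = T := by
      ext x; simp only [Finset.coe_erase, Set.Finite.coe_toFinset, Set.mem_diff,
        Set.mem_singleton_iff, hT]
    rw [← hset, finsum_mem_coe_finset]
  have hvmem : v ∈ hfin.toFinset := hfin.mem_toFinset.mpr hv
  have hkey : w v + ∑ x ∈ hfin.toFinset.erase v, w x = ∑ x ∈ hfin.toFinset, w x :=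
    Finset.add_sum_erase _ _ hvmem
  rw [hTsum, hSsum] at hsum
  linarith
end

section
/- Let G be a finite simple undirected graph with vertex set V, let B ⊆ V and c ∈ B, and suppose that every neighbor of every vertex of B \ {c} lies in B. Let S be a connected set of G with S \ B ≠ ∅. Then: (i) if S ∩ (B \ {c}) ≠ ∅ then c ∈ S and the induced subgraph G[S ∩ B] is connected; and (ii) S \ (B \ {c}) is a connected set of G. -/
section Aux
variable {V : Type*} (G : SimpleGraph V) (B : Set V) (c : V)

lemma lemA (hc : c ∈ B) (hB : ∀ x ∈ B \ {c}, G.neighborSet x ⊆ B) (S : Set V) :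
    ∀ {a b : ↥S} (_ : (G.induce S).Walk a b) (haB : (a : V) ∈ B), (b : V) ∉ B →
      ∃ hcS : c ∈ S,
        (G.induce (S ∩ B)).Reachable ⟨(a : V), a.2, haB⟩ ⟨c, hcS, hc⟩ := by
  intro a b w
  induction w with
  | nil => intro haB hbB; exact absurd haB hbB
  | @cons u x b h p ih =>
    intro haB hbB
    by_cases hx : (x : V) ∈ B
    · obtain ⟨hcS, hr⟩ := ih hx hbB
      refine ⟨hcS, ?_⟩
      have hadj : (G.induce (S ∩ B)).Adj ⟨(u : V), u.2, haB⟩ ⟨(x : V), x.2, hx⟩ := h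
      exact hadj.reachable.trans hr
    · have hux : G.Adj (u : V) (x : V) := h
      have huc : (u : V) = c := by
        by_contra hne
        exact hx (hB u ⟨haB, hne⟩ hux)
      refine ⟨huc ▸ u.2, ?_⟩
      have : (⟨(u : V), u.2, haB⟩ : ↥(S ∩ B)) = ⟨c, huc ▸ u.2, hc⟩ := Subtype.ext huc
      rw [this]

lemma lemC (hc : c ∈ B) (hB : ∀ x ∈ B \ {c}, G.neighborSet x ⊆ B) (S : Set V) :
    ∀ {a b : ↥S} (_ : (G.induce S).Walk a b) (hbD : (b : V) ∉ B \ {c}),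
      (∀ haD : (a : V) ∉ B \ {c},
        (G.induce (S \ (B \ {c}))).Reachable ⟨(a : V), a.2, haD⟩ ⟨(b : V), b.2, hbD⟩) ∧
      ((a : V) ∈ B \ {c} → ∃ hcS : c ∈ S,
        (G.induce (S \ (B \ {c}))).Reachable ⟨c, hcS, fun h => h.2 rfl⟩ ⟨(b : V), b.2, hbD⟩) := by
  intro a b w
  induction w with
  | nil =>
    intro hbD
    exact ⟨fun haD => SimpleGraph.Reachable.refl _, fun haB => absurd haB hbD⟩
  | @cons u x b h p ih =>
    intro hbD
    obtain ⟨ih1, ih2⟩ := ih hbD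
    constructor
    · intro haD
      by_cases hx : (x : V) ∈ B \ {c}
      · have hux : G.Adj (x : V) (u : V) := (show G.Adj (u:V) (x:V) from h).symm
        have huB : (u : V) ∈ B := hB x hx hux
        have huc : (u : V) = c := by
          by_contra hne
          exact haD ⟨huB, hne⟩
        obtain ⟨hcS, hr⟩ := ih2 hx
        have : (⟨(u : V), u.2, haD⟩ : ↥(S \ (B \ {c}))) =
            ⟨c, hcS, fun h => h.2 rfl⟩ := Subtype.ext huc
        rw [this]; exact hr
      · have hadj : (G.induce (S \ (B \ {c}))).Adj ⟨(u : V), u.2, haD⟩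
            ⟨(x : V), x.2, hx⟩ := h
        exact hadj.reachable.trans (ih1 hx)
    · intro haB
      by_cases hx : (x : V) ∈ B \ {c}
      · exact ih2 hx
      · have hux : G.Adj (u : V) (x : V) := h
        have hxB : (x : V) ∈ B := hB u haB hux
        have hxc : (x : V) = c := by
          by_contra hne
          exact hx ⟨hxB, hne⟩
        refine ⟨hxc ▸ x.2, ?_⟩
        have : (⟨c, hxc ▸ x.2, fun h => h.2 rfl⟩ : ↥(S \ (B \ {c}))) =
            ⟨(x : V), x.2, hx⟩ := Subtype.ext hxc.symm
        rw [this]; exact ih1 hx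

end Aux

/-- If `B ⊆ V`, `c ∈ B`, every neighbor of every vertex of `B \ {c}` lies in `B`, and
`S` is a connected set with `S \ B ≠ ∅`, then: (i) if `S` meets `B \ {c}` then `c ∈ S`
and `G[S ∩ B]` is connected; and (ii) `S \ (B \ {c})` is a connected set. -/

theorem stmt12 {V : Type*} [Fintype V] (G : SimpleGraph V)
    (B : Set V) (c : V) (hc : c ∈ B)
    (hB : ∀ x ∈ B \ {c}, G.neighborSet x ⊆ B)
    (S : Set V) (hS : ConnectedSet G S) (hout : (S \ B).Nonempty) :
    ((S ∩ (B \ {c})).Nonempty → c ∈ S ∧ (G.induce (S ∩ B)).Connected) ∧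
    ConnectedSet G (S \ (B \ {c})) := by
  obtain ⟨v, hvS, hvB⟩ := hout
  have hpre := hS.2.preconnected
  constructor
  · intro ⟨u, huS, huBc⟩
    -- walk from u to v
    obtain ⟨w⟩ := hpre ⟨u, huS⟩ ⟨v, hvS⟩
    obtain ⟨hcS, _⟩ := lemA G B c hc hB S w huBc.1 hvB
    refine ⟨hcS, ?_⟩
    have : Nonempty ↥(S ∩ B) := ⟨⟨c, hcS, hc⟩⟩
    constructor
    rintro ⟨x, hxS, hxB⟩ ⟨y, hyS, hyB⟩
    obtain ⟨wxv⟩ := hpre ⟨x, hxS⟩ ⟨v, hvS⟩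
    obtain ⟨wyv⟩ := hpre ⟨y, hyS⟩ ⟨v, hvS⟩
    obtain ⟨_, hrx⟩ := lemA G B c hc hB S wxv hxB hvB
    obtain ⟨_, hry⟩ := lemA G B c hc hB S wyv hyB hvB
    exact hrx.trans hry.symm
  · have : Nonempty ↥(S \ (B \ {c})) := ⟨⟨v, hvS, fun h => hvB h.1⟩⟩
    refine ⟨⟨v, hvS, fun h => hvB h.1⟩, ?_⟩
    constructor
    rintro ⟨x, hxS, hxD⟩ ⟨y, hyS, hyD⟩
    obtain ⟨w⟩ := hpre ⟨x, hxS⟩ ⟨y, hyS⟩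
    exact (lemC G B c hc hB S w hyD).1 hxD
end

section
/- Let G be a finite simple undirected graph with vertex set V and vertex weights w : V → ℝ, let B ⊆ V and c ∈ B, and suppose that every neighbor of every vertex of B \ {c} lies in B. Let ρ = max{w(X) : X ⊆ B, c ∈ X, X a connected set of G}. Then the maximum of w(S) over all connected sets S of G equals the maximum of the following two quantities: (1) the maximum of w(X) over all connected sets X ⊆ B, and (2) the maximum over all connected sets S ⊆ V \ (B \ {c}) of w(S) + (ρ − w(c) if c ∈ S, else 0). -/
open SimpleGraph

open scoped Classical

section Aux

variable {V : Type*}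

lemma connected_induce_iff_walks (G : SimpleGraph V) {S : Set V} :
    (G.induce S).Connected ↔ S.Nonempty ∧ ∀ u ∈ S, ∀ v ∈ S,
      ∃ p : G.Walk u v, ∀ x ∈ p.support, x ∈ S := by
  rw [SimpleGraph.connected_induce_iff,
    SimpleGraph.Subgraph.connected_iff_forall_exists_walk_subgraph]
  simp only [Subgraph.induce_verts, Subgraph.verts_top]
  constructor
  · rintro ⟨hne, h⟩
    refine ⟨hne, fun u hu v hv => ?_⟩
    obtain ⟨p, hp⟩ := h hu hv
    exact ⟨p, fun x hx => by simpa using hp.1 (p.mem_verts_toSubgraph.2 hx)⟩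
  · rintro ⟨hne, h⟩
    refine ⟨hne, fun {u v} hu hv => ?_⟩
    obtain ⟨p, hp⟩ := h u hu v hv
    refine ⟨p, ⟨fun x hx => by simpa using hp x (p.mem_verts_toSubgraph.1 hx), ?_⟩⟩
    intro a b hab
    simp only [Subgraph.induce_adj, Subgraph.top_adj]
    exact ⟨hp a (p.mem_verts_toSubgraph.1 hab.fst_mem),
      hp b (p.mem_verts_toSubgraph.1 hab.snd_mem), hab.adj_sub⟩

lemma connectedSet_iff_walks (G : SimpleGraph V) {S : Set V} :
    ConnectedSet G S ↔ S.Nonempty ∧ ∀ u ∈ S, ∀ v ∈ S,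
      ∃ p : G.Walk u v, ∀ x ∈ p.support, x ∈ S := by
  unfold ConnectedSet
  rw [connected_induce_iff_walks]
  tauto

lemma connectedSet_singleton (G : SimpleGraph V) (c : V) : ConnectedSet G {c} := by
  rw [connectedSet_iff_walks]
  refine ⟨⟨c, rfl⟩, fun u hu v hv => ?_⟩
  simp only [Set.mem_singleton_iff] at hu hv
  subst hu; subst hv
  exact ⟨Walk.nil, by simp⟩

lemma claimB (G : SimpleGraph V) {B : Set V} {c : V} (hc : c ∈ B)
    (hB : ∀ x ∈ B \ {c}, G.neighborSet x ⊆ B) {S : Set V}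
    {u v : V} (p : G.Walk u v) (hp : ∀ x ∈ p.support, x ∈ S) (hv : v ∈ B) :
    (u ∈ B → ∃ q : G.Walk u v, ∀ x ∈ q.support, x ∈ S ∩ B) ∧
      (u ∉ B → c ∈ S ∧ ∃ q : G.Walk c v, ∀ x ∈ q.support, x ∈ S ∩ B) := by
  induction p with
  | nil =>
    refine ⟨fun hu => ⟨Walk.nil, ?_⟩, fun hu => absurd hv hu⟩
    intro x hx
    simp only [Walk.support_nil, List.mem_singleton] at hx
    subst hx
    exact ⟨hp _ (by simp), hv⟩
  | @cons u b v' h p ih =>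
    have hu' : u ∈ S := hp u (by simp)
    have hb' : b ∈ S := hp b (by simp [Walk.support_cons])
    have hp' : ∀ x ∈ p.support, x ∈ S := fun x hx => hp x (by simp [Walk.support_cons, hx])
    have IH := ih hp' hv
    constructor
    · intro hu
      by_cases hbB : b ∈ B
      · obtain ⟨q, hq⟩ := IH.1 hbB
        refine ⟨Walk.cons h q, ?_⟩
        intro x hx
        rcases (by simpa [Walk.support_cons] using hx : x = u ∨ x ∈ q.support) with rfl | hx
        · exact ⟨hu', hu⟩
        · exact hq x hx
      · have huc : u = c := by
          by_contra hne
          exact hbB (hB u ⟨hu, hne⟩ h)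
        subst huc
        exact (IH.2 hbB).2
    · intro hu
      by_cases hbB : b ∈ B
      · have hbc : b = c := by
          by_contra hne
          exact hu (hB b ⟨hbB, hne⟩ h.symm)
        obtain ⟨q, hq⟩ := IH.1 hbB
        subst hbc
        exact ⟨hb', q, hq⟩
      · exact IH.2 hbB

lemma claimC (G : SimpleGraph V) {B : Set V} {c : V} (hc : c ∈ B)
    (hB : ∀ x ∈ B \ {c}, G.neighborSet x ⊆ B) {S : Set V}
    {u v : V} (p : G.Walk u v) (hp : ∀ x ∈ p.support, x ∈ S) (hv : v ∉ B \ {c}) :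
    (u ∉ B \ {c} → ∃ q : G.Walk u v, ∀ x ∈ q.support, x ∈ S ∩ (B \ {c})ᶜ) ∧
      (u ∈ B \ {c} → c ∈ S ∧ ∃ q : G.Walk c v, ∀ x ∈ q.support, x ∈ S ∩ (B \ {c})ᶜ) := by
  induction p with
  | nil =>
    refine ⟨fun hu => ⟨Walk.nil, ?_⟩, fun hu => absurd hu hv⟩
    intro x hx
    simp only [Walk.support_nil, List.mem_singleton] at hx
    subst hx
    exact ⟨hp _ (by simp), hv⟩
  | @cons u b v' h p ih =>
    have hu' : u ∈ S := hp u (by simp)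
    have hb' : b ∈ S := hp b (by simp [Walk.support_cons])
    have hp' : ∀ x ∈ p.support, x ∈ S := fun x hx => hp x (by simp [Walk.support_cons, hx])
    have IH := ih hp' hv
    constructor
    · intro hu
      by_cases hbB : b ∈ B \ {c}
      · have huc : u = c := by
          have huB : u ∈ B := hB b hbB h.symm
          by_contra hne
          exact hu ⟨huB, hne⟩
        subst huc
        exact (IH.2 hbB).2
      · obtain ⟨q, hq⟩ := IH.1 hbB
        refine ⟨Walk.cons h q, ?_⟩
        intro x hx
        rcases (by simpa [Walk.support_cons] using hx : x = u ∨ x ∈ q.support) with rfl | hx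
        · exact ⟨hu', hu⟩
        · exact hq x hx
    · intro hu
      by_cases hbB : b ∈ B \ {c}
      · exact IH.2 hbB
      · have hbB' : b ∈ B := hB u hu h
        have hbc : b = c := by
          by_contra hne
          exact hbB ⟨hbB', hne⟩
        obtain ⟨q, hq⟩ := IH.1 hbB
        subst hbc
        exact ⟨hb', q, hq⟩

end Aux

/-- Block decomposition: with `B`, `c` as in the block situation and
`ρ = max{w(X) : X ⊆ B, c ∈ X, X connected}`, the maximum weight of a connected set
of `G` equals the maximum of (1) the maximum over connected sets contained in `B`
and (2) the maximum over connected sets `S ⊆ V \ (B \ {c})` of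
`w(S) + (ρ − w(c)` if `c ∈ S`, else `0)`. -/
theorem stmt13 {V : Type*} [Fintype V] (G : SimpleGraph V) (w : V → ℝ)
    (B : Set V) (c : V) (hc : c ∈ B)
    (hB : ∀ x ∈ B \ {c}, G.neighborSet x ⊆ B)
    (ρ : ℝ)
    (hρ : ρ = sSup {x : ℝ | ∃ X : Set V, X ⊆ B ∧ c ∈ X ∧ ConnectedSet G X ∧
      x = ∑ᶠ y ∈ X, w y}) :
    sSup {x : ℝ | ∃ S : Set V, ConnectedSet G S ∧ x = ∑ᶠ y ∈ S, w y} =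
      max
        (sSup {x : ℝ | ∃ X : Set V, X ⊆ B ∧ ConnectedSet G X ∧ x = ∑ᶠ y ∈ X, w y})
        (sSup {x : ℝ | ∃ S : Set V, S ⊆ (B \ {c})ᶜ ∧ ConnectedSet G S ∧
          x = (∑ᶠ y ∈ S, w y) + (if c ∈ S then ρ - w c else 0)}) := by
  set f : Set V → ℝ := fun S => ∑ᶠ y ∈ S, w y with hf
  set A : Set ℝ := {x : ℝ | ∃ S : Set V, ConnectedSet G S ∧ x = f S} with hA
  set A1 : Set ℝ := {x : ℝ | ∃ X : Set V, X ⊆ B ∧ ConnectedSet G X ∧ x = f X} with hA1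
  set A2 : Set ℝ := {x : ℝ | ∃ S : Set V, S ⊆ (B \ {c})ᶜ ∧ ConnectedSet G S ∧
    x = f S + (if c ∈ S then ρ - w c else 0)} with hA2
  set R : Set ℝ := {x : ℝ | ∃ X : Set V, X ⊆ B ∧ c ∈ X ∧ ConnectedSet G X ∧ x = f X} with hR
  -- finiteness
  have hAfin : A.Finite := by
    apply (Set.finite_range f).subset
    rintro x ⟨S, _, rfl⟩; exact ⟨S, rfl⟩
  have hA1fin : A1.Finite := by
    apply (Set.finite_range f).subset
    rintro x ⟨S, _, _, rfl⟩; exact ⟨S, rfl⟩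
  have hA2fin : A2.Finite := by
    apply (Set.finite_range (fun S : Set V => f S + (if c ∈ S then ρ - w c else 0))).subset
    rintro x ⟨S, _, _, rfl⟩; exact ⟨S, rfl⟩
  have hRfin : R.Finite := by
    apply (Set.finite_range f).subset
    rintro x ⟨S, _, _, _, rfl⟩; exact ⟨S, rfl⟩
  have hcc : c ∉ B \ {c} := fun h => h.2 rfl
  -- nonemptiness
  have hAne : A.Nonempty := ⟨f {c}, {c}, connectedSet_singleton G c, rfl⟩
  have hA1ne : A1.Nonempty :=
    ⟨f {c}, {c}, by simpa using hc, connectedSet_singleton G c, rfl⟩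
  have hA2ne : A2.Nonempty :=
    ⟨f {c} + (if c ∈ ({c} : Set V) then ρ - w c else 0), {c}, by simpa using hcc,
      connectedSet_singleton G c, rfl⟩
  have hRne : R.Nonempty :=
    ⟨f {c}, {c}, by simpa using hc, rfl, connectedSet_singleton G c, rfl⟩
  -- ρ facts
  have hρ_mem : ρ ∈ R := by rw [hρ]; exact hRne.csSup_mem hRfin
  obtain ⟨X₀, hX₀B, hcX₀, hX₀conn, hX₀w⟩ := hρ_mem
  have hρ_ub : ∀ X : Set V, X ⊆ B → c ∈ X → ConnectedSet G X → f X ≤ ρ := by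
    intro X h1 h2 h3
    rw [hρ]
    exact le_csSup hRfin.bddAbove ⟨X, h1, h2, h3, rfl⟩
  have hρc : w c ≤ ρ := by
    have := hρ_ub {c} (by simpa using hc) rfl (connectedSet_singleton G c)
    simpa [hf, finsum_mem_singleton] using this
  apply le_antisymm
  · -- sSup A ≤ max
    apply csSup_le hAne
    rintro x ⟨S, hSconn, rfl⟩
    obtain ⟨hSne, hwalks⟩ := (connectedSet_iff_walks G).1 hSconn
    by_cases hSB : S ⊆ B
    · exact le_max_of_le_left (le_csSup hA1fin.bddAbove ⟨S, hSB, hSconn, rfl⟩)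
    by_cases hmix : (S ∩ (B \ {c})).Nonempty
    · obtain ⟨a, haS, haB⟩ := hmix
      obtain ⟨b, hbS, hbB⟩ := Set.not_subset.1 hSB
      have hbB' : b ∉ B \ {c} := fun h => hbB h.1
      obtain ⟨p, hp⟩ := hwalks a haS b hbS
      have hcS : c ∈ S := ((claimC G hc hB p hp hbB').2 haB).1
      -- S ∩ B is a connected set
      have hSBconn : ConnectedSet G (S ∩ B) := by
        rw [connectedSet_iff_walks]
        refine ⟨⟨c, hcS, hc⟩, fun u hu v hv => ?_⟩
        obtain ⟨q, hq⟩ := hwalks u hu.1 v hv.1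
        exact (claimB G hc hB q hq hv.2).1 hu.2
      -- S ∩ (B \ {c})ᶜ is a connected set containing c
      have hS'conn : ConnectedSet G (S ∩ (B \ {c})ᶜ) := by
        rw [connectedSet_iff_walks]
        refine ⟨⟨c, hcS, hcc⟩, fun u hu v hv => ?_⟩
        obtain ⟨q, hq⟩ := hwalks u hu.1 v hv.1
        exact (claimC G hc hB q hq hv.2).1 hu.2
      -- weight decompositions
      have hd1 : f S = f (S ∩ (B \ {c})) + f (S ∩ (B \ {c})ᶜ) := by
        rw [hf]
        simp only
        conv_lhs => rw [← Set.inter_union_compl S (B \ {c})]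
        exact finsum_mem_union
          (Set.disjoint_of_subset Set.inter_subset_right Set.inter_subset_right
            disjoint_compl_right) (Set.toFinite _) (Set.toFinite _)
      have hd2 : f (S ∩ B) = f (S ∩ (B \ {c})) + w c := by
        have hset : S ∩ B = (S ∩ (B \ {c})) ∪ {c} := by
          ext x
          constructor
          · rintro ⟨hxS, hxB⟩
            by_cases hxc : x = c
            · exact Or.inr hxc
            · exact Or.inl ⟨hxS, hxB, hxc⟩
          · rintro (⟨hxS, hxB, _⟩ | hxc)
            · exact ⟨hxS, hxB⟩
            · rw [Set.mem_singleton_iff] at hxc; subst hxc; exact ⟨hcS, hc⟩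
        rw [hf]
        simp only
        rw [hset, finsum_mem_union ?_ (Set.toFinite _) (Set.toFinite _),
          finsum_mem_singleton]
        rw [Set.disjoint_singleton_right]
        exact fun h => hcc h.2
      have hSB_le : f (S ∩ B) ≤ ρ := hρ_ub _ Set.inter_subset_right ⟨hcS, hc⟩ hSBconn
      have key : f S ≤ f (S ∩ (B \ {c})ᶜ) + (ρ - w c) := by
        rw [hd1]
        have := hd2
        linarith
      refine le_max_of_le_right (le_trans key (le_csSup hA2fin.bddAbove ?_))
      refine ⟨S ∩ (B \ {c})ᶜ, Set.inter_subset_right, hS'conn, ?_⟩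
      rw [if_pos ⟨hcS, hcc⟩]
    · -- S ⊆ (B \ {c})ᶜ
      have hSsub : S ⊆ (B \ {c})ᶜ := fun x hx hxB =>
        hmix ⟨x, hx, hxB⟩
      have hle : f S ≤ f S + (if c ∈ S then ρ - w c else 0) := by
        by_cases h : c ∈ S
        · rw [if_pos h]; linarith
        · rw [if_neg h]; linarith
      exact le_max_of_le_right (le_trans hle
        (le_csSup hA2fin.bddAbove ⟨S, hSsub, hSconn, rfl⟩))
  · -- max ≤ sSup A
    apply max_le
    · apply csSup_le hA1ne
      rintro x ⟨X, _, hXconn, rfl⟩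
      exact le_csSup hAfin.bddAbove ⟨X, hXconn, rfl⟩
    · apply csSup_le hA2ne
      rintro x ⟨S, hSsub, hSconn, rfl⟩
      by_cases hcS : c ∈ S
      · -- glue S with X₀
        have hTconn : ConnectedSet G (S ∪ X₀) :=
          ⟨hSconn.1.mono Set.subset_union_left,
            SimpleGraph.induce_union_connected hSconn.2.preconnected hX₀conn.2.preconnected ⟨c, hcS, hcX₀⟩⟩
        have hdisj : Disjoint S (X₀ \ {c}) := by
          rw [Set.disjoint_left]
          intro x hxS hx
          exact (hSsub hxS) ⟨hX₀B hx.1, hx.2⟩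
        have hset : S ∪ X₀ = S ∪ (X₀ \ {c}) := by
          ext x
          constructor
          · rintro (h | h)
            · exact Or.inl h
            · by_cases hxc : x = c
              · subst hxc; exact Or.inl hcS
              · exact Or.inr ⟨h, hxc⟩
          · rintro (h | h)
            · exact Or.inl h
            · exact Or.inr h.1
        have hX₀set : X₀ = (X₀ \ {c}) ∪ {c} := by
          ext x
          constructor
          · intro hx
            by_cases hxc : x = c
            · exact Or.inr hxc
            · exact Or.inl ⟨hx, hxc⟩
          · rintro (hx | hx)
            · exact hx.1
            · rw [Set.mem_singleton_iff] at hx; subst hx; exact hcX₀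
        have hwX₀ : f X₀ = f (X₀ \ {c}) + w c := by
          rw [hf]; simp only
          conv_lhs => rw [hX₀set]
          rw [finsum_mem_union ?_ (Set.toFinite _) (Set.toFinite _), finsum_mem_singleton]
          rw [Set.disjoint_singleton_right]
          exact fun h => h.2 rfl
        have hwT : f (S ∪ X₀) = f S + f (X₀ \ {c}) := by
          rw [hf]; simp only
          rw [hset, finsum_mem_union hdisj (Set.toFinite _) (Set.toFinite _)]
        have : f S + (if c ∈ S then ρ - w c else 0) = f (S ∪ X₀) := by
          rw [if_pos hcS, hwT, hX₀w]
          rw [hf] at hwX₀ ⊢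
          simp only at hwX₀ ⊢
          linarith [hwX₀]
        rw [this]
        exact le_csSup hAfin.bddAbove ⟨S ∪ X₀, hTconn, rfl⟩
      · rw [if_neg hcS, add_zero]
        exact le_csSup hAfin.bddAbove ⟨S, hSconn, rfl⟩
end

section
/- Let G be a finite simple undirected graph with vertex set V and vertex weights w : V → ℝ, let B ⊆ V and c ∈ B, suppose that every neighbor of every vertex of B \ {c} lies in B, and suppose w(x) ≤ 0 for every x ∈ B \ {c}. Then for every connected set S of G there exists a set S' ⊆ V with S' ∩ (B \ {c}) = ∅, S' = ∅ or S' a connected set, and w(S') ≥ w(S). -/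
private lemma aux_cross {V : Type*} (G : SimpleGraph V) (S T : Set V) :
    ∀ {a b : S}, (G.induce S).Walk a b → a.val ∉ T → b.val ∈ T →
      ∃ u v : S, G.Adj u v ∧ u.val ∉ T ∧ v.val ∈ T := by
  intro a b p
  induction p with
  | nil => intro h1 h2; exact absurd h2 h1
  | @cons x y z h p ih =>
    intro hx hz
    by_cases hy : y.val ∈ T
    · exact ⟨x, y, h, hx, hy⟩
    · exact ih hy hz

open Classical in
private lemma aux_reach {V : Type*} (G : SimpleGraph V) (S S' : Set V) (c : V)
    (hc : c ∈ S')
    (hcross : ∀ u v : V, u ∈ S' → v ∈ S → v ∉ S' → G.Adj u v → u = c) :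
    ∀ {a b : S}, (G.induce S).Walk a b →
      (G.induce S').Reachable (if h : a.val ∈ S' then ⟨a.val, h⟩ else ⟨c, hc⟩)
        (if h : b.val ∈ S' then ⟨b.val, h⟩ else ⟨c, hc⟩) := by
  intro a b p
  induction p with
  | nil => exact SimpleGraph.Reachable.refl _
  | @cons x y z h p ih =>
    refine SimpleGraph.Reachable.trans ?_ ih
    have hadj : G.Adj x.val y.val := h
    by_cases hx : x.val ∈ S' <;> by_cases hy : y.val ∈ S'
    · rw [dif_pos hx, dif_pos hy]
      exact SimpleGraph.Adj.reachable hadj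
    · have : x.val = c := hcross x.val y.val hx y.2 hy hadj
      rw [dif_pos hx, dif_neg hy]
      have hxc : (⟨x.val, hx⟩ : S') = ⟨c, hc⟩ := Subtype.ext this
      rw [hxc]
    · have : y.val = c := hcross y.val x.val hy x.2 hx hadj.symm
      rw [dif_neg hx, dif_pos hy]
      have hyc : (⟨y.val, hy⟩ : S') = ⟨c, hc⟩ := Subtype.ext this
      rw [hyc]
    · rw [dif_neg hx, dif_neg hy]

/-- Leaf-block removal: if every neighbor of every vertex of `B \ {c}` lies in `B`
and all vertices of `B \ {c}` have nonpositive weight, then every connected set is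
dominated by a (possibly empty) connected set disjoint from `B \ {c}`. -/
theorem stmt16 {V : Type*} [Fintype V] (G : SimpleGraph V) (w : V → ℝ)
    (B : Set V) (c : V) (hc : c ∈ B)
    (hB : ∀ x ∈ B \ {c}, G.neighborSet x ⊆ B)
    (hw : ∀ x ∈ B \ {c}, w x ≤ 0) :
    ∀ S : Set V, ConnectedSet G S → ∃ S' : Set V, S' ∩ (B \ {c}) = ∅ ∧
      (S' = ∅ ∨ ConnectedSet G S') ∧ (∑ᶠ x ∈ S, w x) ≤ ∑ᶠ x ∈ S', w x := by
  intro S hS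
  obtain ⟨hne, hconn⟩ := hS
  set T : Set V := S ∩ (B \ {c}) with hT
  set S' : Set V := S \ (B \ {c}) with hS'
  have hdisj : Disjoint S' T := by
    rw [hS', hT]
    exact Set.disjoint_of_subset_right Set.inter_subset_right Set.disjoint_sdiff_left
  have hunion : S = S' ∪ T := by
    rw [hS', hT]
    ext x
    by_cases hx : x ∈ B \ {c} <;> simp [hx]
  have hTnp : ∑ᶠ x ∈ T, w x ≤ 0 := by
    rw [finsum_mem_eq_finite_toFinset_sum w (Set.toFinite T)]
    refine Finset.sum_nonpos fun x hx => ?_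
    rw [Set.Finite.mem_toFinset] at hx
    exact hw x hx.2
  have hsum : ∑ᶠ x ∈ S, w x = (∑ᶠ x ∈ S', w x) + ∑ᶠ x ∈ T, w x := by
    rw [hunion]
    exact finsum_mem_union hdisj (Set.toFinite _) (Set.toFinite _)
  have hsum_le : ∑ᶠ x ∈ S, w x ≤ ∑ᶠ x ∈ S', w x := by
    rw [hsum]; linarith
  refine ⟨S', Set.diff_inter_self, ?_, hsum_le⟩
  rcases Set.eq_empty_or_nonempty S' with hS'e | hS'ne
  · exact Or.inl hS'e
  rcases Set.eq_empty_or_nonempty T with hTe | hTne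
  · -- S' = S
    have : S' = S := by rw [hunion, hTe, Set.union_empty]
    rw [this]
    exact Or.inr ⟨hne, hconn⟩
  -- both S' and T nonempty; show c ∈ S'
  obtain ⟨a, ha⟩ := hS'ne
  obtain ⟨x, hx⟩ := hTne
  have haS : a ∈ S := ha.1
  have hxS : x ∈ S := hx.1
  have hcS : c ∈ S := by
    have hr : (G.induce S).Reachable ⟨a, haS⟩ ⟨x, hxS⟩ := hconn.preconnected _ _
    refine hr.elim fun p => ?_
    obtain ⟨u, v, huv, hu, hv⟩ := aux_cross G S (B \ {c}) p ha.2 hx.2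
    have huB : u.val ∈ B := hB v.val hv (by exact huv.symm)
    have : u.val = c := by
      by_contra hne'
      exact hu ⟨huB, hne'⟩
    exact this ▸ u.2
  have hcS' : c ∈ S' := ⟨hcS, fun h => h.2 rfl⟩
  have hcross : ∀ u v : V, u ∈ S' → v ∈ S → v ∉ S' → G.Adj u v → u = c := by
    intro u v hu hv hv' hadj
    have hvB : v ∈ B \ {c} := by
      by_contra h
      exact hv' ⟨hv, h⟩
    have huB : u ∈ B := hB v hvB (by exact hadj.symm)
    by_contra hne'
    exact hu.2 ⟨huB, hne'⟩
  refine Or.inr ⟨⟨c, hcS'⟩, ?_⟩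
  rw [SimpleGraph.connected_iff]
  refine ⟨?_, ⟨⟨c, hcS'⟩⟩⟩
  rintro ⟨p, hp⟩ ⟨q, hq⟩
  have hpS : p ∈ S := hp.1
  have hqS : q ∈ S := hq.1
  have hr : (G.induce S).Reachable ⟨p, hpS⟩ ⟨q, hqS⟩ := hconn.preconnected _ _
  refine hr.elim fun walk => ?_
  have := aux_reach G S S' c hcS' hcross walk
  rwa [dif_pos hp, dif_pos hq] at this
end

section
/- Let G be a finite simple undirected graph with vertex set V and vertex weights w : V → ℝ, let A ⊆ V and u, v ∈ A with u ≠ v, suppose that every neighbor of every vertex of A \ {u, v} lies in A, and suppose w(x) ≤ 0 for every x ∈ A \ {u, v}. Then for every connected set S of G with u ∈ S and v ∈ S there exists a connected set S' of G with u ∈ S', v ∈ S', w(S') ≥ w(S), and either S' ∩ (A \ {u, v}) = ∅ or S' ∩ (A \ {u, v}) equals the set of internal vertices of some path from u to v in G all of whose internal vertices lie in A \ {u, v}. -/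
open SimpleGraph

/-- A walk whose support lies in `T` yields reachability in the induced graph. -/
lemma auxReach {V : Type*} (G : SimpleGraph V) (T : Set V) :
    ∀ {x y : V} (Q : G.Walk x y) (h : ∀ z ∈ Q.support, z ∈ T),
      (G.induce T).Reachable ⟨x, h x Q.start_mem_support⟩ ⟨y, h y Q.end_mem_support⟩ := by
  intro x y Q
  induction Q with
  | nil => intro h; exact Reachable.refl _
  | @cons a b c hab Q ih =>
    intro h
    have hb : ∀ z ∈ Q.support, z ∈ T := fun z hz => h z (by simp [hz])
    have h1 : (G.induce T).Adj ⟨a, h a (SimpleGraph.Walk.start_mem_support _)⟩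
        ⟨b, hb b Q.start_mem_support⟩ := hab
    exact (h1.reachable).trans (ih hb)

lemma auxMono {V : Type*} (G : SimpleGraph V) {T T' : Set V} (h : T ⊆ T') {a b : ↥T}
    (r : (G.induce T).Reachable a b) :
    (G.induce T').Reachable ⟨a, h a.2⟩ ⟨b, h b.2⟩ :=
  r.map (G.induceHomOfLE h).toHom

lemma aux1 {V : Type*} (G : SimpleGraph V) (S B : Set V) (u v : V)
    (hkey : ∀ b ∈ B, ∀ a, G.Adj b a → a ∉ B → a = u ∨ a = v) :
    ∀ {x y : V} (Q : G.Walk x y), (∀ z ∈ Q.support, z ∈ S) → ∀ (hx : x ∈ S \ B), y ∉ B →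
      ∃ z, ∃ hz : z ∈ S \ B, (z = y ∨ ((z = u ∨ z = v) ∧ z ∈ Q.support)) ∧
        (G.induce (S \ B)).Reachable ⟨x, hx⟩ ⟨z, hz⟩ := by
  intro x y Q
  induction Q with
  | nil => intro _ hx _; exact ⟨_, hx, Or.inl rfl, Reachable.refl _⟩
  | @cons a b c hab Q ih =>
    intro hsup hx hy
    by_cases hbB : b ∈ B
    · refine ⟨a, hx, Or.inr ⟨?_, Walk.start_mem_support _⟩, Reachable.refl _⟩
      exact hkey b hbB a hab.symm hx.2
    · have hbS : b ∈ S \ B := ⟨hsup b (by simp), hbB⟩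
      obtain ⟨z, hz, hd, hr⟩ := ih (fun z hz => hsup z (by simp [hz])) hbS hy
      have hadj : (G.induce (S \ B)).Adj ⟨a, hx⟩ ⟨b, hbS⟩ := hab
      refine ⟨z, hz, ?_, hadj.reachable.trans hr⟩
      rcases hd with rfl | ⟨h1, h2⟩
      · exact Or.inl rfl
      · exact Or.inr ⟨h1, by simp [h2]⟩

lemma aux2 {V : Type*} (G : SimpleGraph V) (B : Set V) (u v : V)
    (hkey : ∀ b ∈ B, ∀ a, G.Adj b a → a ∉ B → a = u ∨ a = v) :
    ∀ {b y : V} (Q : G.Walk b y), Q.IsPath → u ∉ Q.support → y = v → b ∈ B →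
      ∀ z ∈ Q.support, z = v ∨ z ∈ B := by
  intro b y Q
  induction Q with
  | nil => intro _ _ _ hb z hz; right; rw [show z = _ from by simpa using hz]; exact hb
  | @cons a b' c hab Q ih =>
    intro hP hu hy ha z hz
    rw [Walk.support_cons, List.mem_cons] at hz
    rcases hz with rfl | hz
    · exact Or.inr ha
    rw [Walk.cons_isPath_iff] at hP
    have hu' : u ∉ Q.support := fun h => hu (by simp [h])
    by_cases hb' : b' ∈ B
    · exact ih hP.1 hu' hy hb' z hz
    · rcases hkey a ha b' hab hb' with hbu | hbv
      · have : u ∈ (Walk.cons hab Q).support := by rw [← hbu]; simp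
        exact absurd this hu
      · subst hbv
        subst hy
        rw [(Walk.isPath_iff_eq_nil (p := Q)).1 hP.1] at hz
        left; simpa using hz



/-- Negative triconnected component: with `A`, `u`, `v` as in the cut-pair situation
and all vertices of `A \ {u, v}` of nonpositive weight, every connected set containing
`u` and `v` is dominated by a connected set `S'` containing `u` and `v` whose
intersection with `A \ {u, v}` is either empty or the set of internal vertices of a
path from `u` to `v` all of whose internal vertices lie in `A \ {u, v}`. -/
theorem stmt17 {V : Type*} [Fintype V] (G : SimpleGraph V) (w : V → ℝ)
    (A : Set V) (u v : V) (hu : u ∈ A) (hv : v ∈ A) (huv : u ≠ v)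
    (hA : ∀ x ∈ A \ {u, v}, G.neighborSet x ⊆ A)
    (hw : ∀ x ∈ A \ {u, v}, w x ≤ 0) :
    ∀ S : Set V, ConnectedSet G S → u ∈ S → v ∈ S →
      ∃ S' : Set V, ConnectedSet G S' ∧ u ∈ S' ∧ v ∈ S' ∧
        (∑ᶠ x ∈ S, w x) ≤ (∑ᶠ x ∈ S', w x) ∧
        (S' ∩ (A \ {u, v}) = ∅ ∨
          ∃ p : G.Walk u v, p.IsPath ∧
            {x : V | x ∈ p.support} \ {u, v} ⊆ A \ {u, v} ∧
            S' ∩ (A \ {u, v}) = {x : V | x ∈ p.support} \ {u, v}) := by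
  intro S hS huS hvS
  classical
  set B : Set V := A \ {u, v} with hBdef
  have huB : u ∉ B := fun h => h.2 (Or.inl rfl)
  have hvB : v ∉ B := fun h => h.2 (Or.inr rfl)
  have huSB : u ∈ S \ B := ⟨huS, huB⟩
  have hvSB : v ∈ S \ B := ⟨hvS, hvB⟩
  obtain ⟨hSne, hScon⟩ := hS
  have hkey : ∀ b ∈ B, ∀ a, G.Adj b a → a ∉ B → a = u ∨ a = v := by
    intro b hb a hadj ha
    have haA : a ∈ A := hA b hb hadj
    by_contra hcon
    push_neg at hcon
    exact ha ⟨haA, by simp [hcon.1, hcon.2]⟩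
  have key : ∀ x ∈ S, ∃ Q : G.Walk x u, ∀ z ∈ Q.support, z ∈ S := by
    intro x hx
    obtain ⟨W⟩ := hScon.preconnected ⟨x, hx⟩ ⟨u, huS⟩
    refine ⟨W.map (SimpleGraph.Embedding.induce S).toHom, ?_⟩
    intro z hz
    have hz2 : z ∈ (W.map (SimpleGraph.Embedding.induce S).toHom).support := hz
    rw [SimpleGraph.Walk.support_map, List.mem_map] at hz2
    obtain ⟨⟨z', hz'⟩, _, rfl⟩ := hz2
    exact hz'
  have wle : ∀ S' : Set V, S' ⊆ S → (∀ x ∈ S, x ∉ S' → w x ≤ 0) →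
      (∑ᶠ x ∈ S, w x) ≤ (∑ᶠ x ∈ S', w x) := by
    intro S' hsub hneg
    have h1 := finsum_mem_inter_add_sdiff (f := w) S' (Set.toFinite S)
    rw [Set.inter_eq_self_of_subset_right hsub] at h1
    have h2 : (∑ᶠ x ∈ S \ S', w x) ≤ 0 := by
      rw [finsum_mem_eq_finite_toFinset_sum _ (Set.toFinite _)]
      refine Finset.sum_nonpos fun i hi => ?_
      rw [Set.Finite.mem_toFinset] at hi
      exact hneg i hi.1 hi.2
    linarith
  by_cases hreach : (G.induce (S \ B)).Reachable ⟨u, huSB⟩ ⟨v, hvSB⟩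
  · -- take S' = S \ B
    have hpre : ∀ a : ↥(S \ B), (G.induce (S \ B)).Reachable a ⟨u, huSB⟩ := by
      rintro ⟨x, hx⟩
      obtain ⟨Q, hQ⟩ := key x hx.1
      obtain ⟨z, hz, hd, hr⟩ := aux1 G S B u v hkey Q hQ hx huB
      rcases hd with rfl | ⟨hd, _⟩
      · exact hr
      · rcases hd with rfl | rfl
        · exact hr
        · exact hr.trans hreach.symm
    haveI : Nonempty ↥(S \ B) := ⟨⟨u, huSB⟩⟩
    refine ⟨S \ B, ⟨⟨u, huSB⟩, SimpleGraph.Connected.mk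
        fun a b => (hpre a).trans (hpre b).symm⟩,
      huSB, hvSB, ?_, Or.inl (Set.diff_inter_self)⟩
    refine wle _ Set.diff_subset fun x hx hx' => ?_
    have hxB : x ∈ B := by by_contra h; exact hx' ⟨hx, h⟩
    exact hw x hxB
  · -- there is a path from u to v inside S; all its internal vertices lie in B
    obtain ⟨Q0, hQ0⟩ := key v hvS
    have hW : ∀ z ∈ Q0.reverse.support, z ∈ S := by
      intro z hz
      exact hQ0 z (by simpa [SimpleGraph.Walk.support_reverse] using hz)
    obtain ⟨p, hp, hpS⟩ : ∃ p : G.Walk u v, p.IsPath ∧ ∀ z ∈ p.support, z ∈ S :=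
      ⟨(Q0.reverse.toPath : G.Path u v).1, (Q0.reverse.toPath : G.Path u v).2,
        fun z hz => hW z (SimpleGraph.Walk.support_toPath_subset Q0.reverse hz)⟩
    have hint : ∀ z ∈ p.support, z = u ∨ z = v ∨ z ∈ B := by
      cases p with
      | nil => exact absurd rfl huv
      | @cons _ b _ hab q =>
        rw [SimpleGraph.Walk.cons_isPath_iff] at hp
        by_cases hbB : b ∈ B
        · have h2 := aux2 G B u v hkey q hp.1 hp.2 rfl hbB
          intro z hz
          rw [SimpleGraph.Walk.support_cons, List.mem_cons] at hz
          rcases hz with rfl | hz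
          · exact Or.inl rfl
          · rcases h2 z hz with h | h
            · exact Or.inr (Or.inl h)
            · exact Or.inr (Or.inr h)
        · exfalso
          have hbS : b ∈ S \ B := ⟨hpS b (by simp), hbB⟩
          obtain ⟨z, hz, hd, hr⟩ :=
            aux1 G S B u v hkey q (fun z hz => hpS z (by simp [hz])) hbS hvB
          have hzv : z = v := by
            rcases hd with rfl | ⟨hd2, hmem⟩
            · rfl
            · rcases hd2 with rfl | rfl
              · exact absurd hmem hp.2
              · rfl
          subst hzv
          have hadj : (G.induce (S \ B)).Adj ⟨u, huSB⟩ ⟨b, hbS⟩ := hab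
          exact hreach (hadj.reachable.trans hr)
    set S' : Set V := (S \ B) ∪ {z | z ∈ p.support} with hS'def
    have hsub : S' ⊆ S := by
      rintro x (hx | hx)
      · exact hx.1
      · exact hpS x hx
    have huS' : u ∈ S' := Or.inl huSB
    have hvS' : v ∈ S' := Or.inl hvSB
    have hSBsub : S \ B ⊆ S' := Set.subset_union_left
    have hpsub : ∀ z ∈ p.support, z ∈ S' := fun z hz => Or.inr hz
    have hreachp : ∀ z (hz : z ∈ p.support),
        (G.induce S').Reachable ⟨u, huS'⟩ ⟨z, hpsub z hz⟩ := by
      intro z hz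
      exact auxReach G S' (p.takeUntil z hz)
        (fun y hy => hpsub y (SimpleGraph.Walk.support_takeUntil_subset p hz hy))
    have hpre : ∀ a : ↥S', (G.induce S').Reachable a ⟨u, huS'⟩ := by
      rintro ⟨x, hx⟩
      rcases hx with hx | hx
      · obtain ⟨Q, hQ⟩ := key x hx.1
        obtain ⟨z, hz, hd, hr⟩ := aux1 G S B u v hkey Q hQ hx huB
        have hr' : (G.induce S').Reachable ⟨x, Or.inl hx⟩ ⟨z, Or.inl hz⟩ :=
          auxMono G hSBsub hr
        rcases hd with rfl | ⟨hd2, _⟩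
        · exact hr'
        · rcases hd2 with hzu | hzv
          · have he : (⟨z, Or.inl hz⟩ : ↥S') = ⟨u, huS'⟩ := Subtype.ext hzu
            exact he ▸ hr'
          · have he : (⟨z, Or.inl hz⟩ : ↥S') = ⟨v, hvS'⟩ := Subtype.ext hzv
            exact (he ▸ hr').trans (hreachp v p.end_mem_support).symm
      · exact (hreachp x hx).symm
    haveI : Nonempty ↥S' := ⟨⟨u, huS'⟩⟩
    refine ⟨S', ⟨⟨u, huS'⟩, SimpleGraph.Connected.mk
        fun a b => (hpre a).trans (hpre b).symm⟩,
      huS', hvS', ?_, Or.inr ⟨p, hp, ?_, ?_⟩⟩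
    · refine wle S' hsub fun x hx hx' => ?_
      have hxB : x ∈ B := by by_contra h; exact hx' (Or.inl ⟨hx, h⟩)
      exact hw x hxB
    · rintro z ⟨hz1, hz2⟩
      rcases hint z hz1 with rfl | rfl | h
      · exact absurd (Or.inl rfl) hz2
      · exact absurd (Or.inr rfl) hz2
      · exact h
    · ext z
      constructor
      · rintro ⟨hz1, hz2⟩
        rcases hz1 with hz1 | hz1
        · exact absurd hz2 hz1.2
        · refine ⟨hz1, ?_⟩
          rintro (rfl | rfl)
          · exact huB hz2
          · exact hvB hz2
      · rintro ⟨hz1, hz2⟩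
        have hzB : z ∈ B := by
          rcases hint z hz1 with rfl | rfl | h
          · exact absurd (Or.inl rfl) hz2
          · exact absurd (Or.inr rfl) hz2
          · exact h
        exact ⟨Or.inr hz1, hzB⟩
end
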